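/- arXiv:1510.04067 — 6 statements merged into one kernel-verified Lean document; each statement's English description precedes it below -/
import Mathlib

section
/- Let λ be an uncountable regular cardinal and suppose S = ⟨I × κ, 𝓡⟩ is a λ-system with no cofinal branch, and let κ' = width(S). Then there is a λ-system S' = ⟨I × κ', 𝓡'⟩ with no cofinal branch such that 𝓡' consists of a single relation. -/
noncomputable section

open Cardinal Set

namespace Paper

/-- `C` is a club (closed and unbounded set) in the ordinal `α`. -/
def IsClubIn (C : Set Ordinal) (α : Ordinal) : Prop :=
  C ⊆ Set.Iio α ∧ (∀ γ < α, ∃ β ∈ C, γ ≤ β) ∧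
    ∀ γ < α, 0 < γ → sSup (C ∩ Set.Iio γ) = γ → γ ∈ C

/-- `γ` is a limit point of `C`: it belongs to `C` and is the supremum of the
earlier elements of `C`. -/
def IsLimitPt (γ : Ordinal) (C : Set Ordinal) : Prop :=
  γ ∈ C ∧ sSup (C ∩ Set.Iio γ) = γ

/-- A `lam`-system: an unbounded set `I ⊆ lam`, levels `{α} × κ_α` for `α ∈ I`
with `0 < κ_α < lam`, and a nonempty set `Rels` of fewer than `lam` many binary,
transitive, tree-like relations on the underlying set
`⋃_{α ∈ I} {α} × κ_α ⊆ Ordinal × Ordinal`, each increasing in the first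
coordinate, such that any two levels are connected by some relation. -/
structure System (lam : Cardinal.{0}) where
  I : Set Ordinal
  kappa : Ordinal → Cardinal.{0}
  Rels : Set ((Ordinal × Ordinal) → (Ordinal × Ordinal) → Prop)
  I_lt : ∀ α ∈ I, α < lam.ord
  I_unbounded : ∀ γ < lam.ord, ∃ α ∈ I, γ < α
  kappa_pos : ∀ α ∈ I, 0 < kappa α
  kappa_lt : ∀ α ∈ I, kappa α < lam
  Rels_nonempty : Rels.Nonempty
  Rels_lt : #Rels < Cardinal.lift.{1} lam
  rel_mem : ∀ R ∈ Rels, ∀ u v : Ordinal × Ordinal, R u v →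
    (u.1 ∈ I ∧ u.2 < (kappa u.1).ord) ∧ (v.1 ∈ I ∧ v.2 < (kappa v.1).ord)
  rel_trans : ∀ R ∈ Rels, ∀ u v w, R u v → R v w → R u w
  rel_treeLike : ∀ R ∈ Rels, ∀ u v w, R u w → R v w → u = v ∨ R u v ∨ R v u
  rel_increasing : ∀ R ∈ Rels, ∀ u v : Ordinal × Ordinal, R u v → u.1 < v.1
  connected : ∀ α₀ ∈ I, ∀ α₁ ∈ I, α₀ < α₁ →
    ∃ β₀ < (kappa α₀).ord, ∃ β₁ < (kappa α₁).ord, ∃ R ∈ Rels, R (α₀, β₀) (α₁, β₁)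

/-- The width of a system: `max(sup{κ_α : α ∈ I}, |Rels|)`. -/
def System.width {lam : Cardinal.{0}} (S : System lam) : Cardinal.{1} :=
  max (⨆ α : S.I, Cardinal.lift.{1} (S.kappa α.1)) #S.Rels

/-- A system is narrow if `width(S)⁺ < lam`. -/
def System.IsNarrow {lam : Cardinal.{0}} (S : System lam) : Prop :=
  Order.succ S.width < Cardinal.lift.{1} lam

/-- `b` is a branch of `S` through the relation `R`: a set of pairwise
`R`-comparable elements of `S`. -/
def System.IsBranch {lam : Cardinal.{0}} (S : System lam)
    (R : (Ordinal × Ordinal) → (Ordinal × Ordinal) → Prop)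
    (b : Set (Ordinal × Ordinal)) : Prop :=
  R ∈ S.Rels ∧ (∀ u ∈ b, u.1 ∈ S.I ∧ u.2 < (S.kappa u.1).ord) ∧
    ∀ u ∈ b, ∀ v ∈ b, u = v ∨ R u v ∨ R v u

/-- A cofinal branch: a branch meeting levels `S_α` for unboundedly many `α ∈ I`. -/
def System.IsCofinalBranch {lam : Cardinal.{0}} (S : System lam)
    (R : (Ordinal × Ordinal) → (Ordinal × Ordinal) → Prop)
    (b : Set (Ordinal × Ordinal)) : Prop :=
  S.IsBranch R b ∧ ∀ γ < lam.ord, ∃ u ∈ b, γ < u.1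

/-- `S` has a cofinal branch (through some of its relations). -/
def System.HasCofinalBranch {lam : Cardinal.{0}} (S : System lam) : Prop :=
  ∃ R b, S.IsCofinalBranch R b

section Helpers

/-- Every function into a finite nonempty type has an ultrafilter limit. -/
lemma exists_ulim {α : Type*} {β : Type*} [Finite β] [Nonempty β]
    (U : Ultrafilter α) (g : α → β) : ∃ v, {x | g x = v} ∈ U := by
  obtain ⟨v, -, hv⟩ := Ultrafilter.eq_pure_of_finite_mem
    (f := U.map g) Set.finite_univ Filter.univ_mem
  refine ⟨v, ?_⟩
  have h1 : ({v} : Set β) ∈ U.map g := by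
    rw [hv]; exact Filter.mem_pure.2 rfl
  have h2 : g ⁻¹' {v} ∈ U := Ultrafilter.mem_map.1 h1
  simpa [Set.preimage, Set.mem_singleton_iff] using h2

/-- A `lam`-system of finite width has a cofinal branch. -/
theorem System.hasCofinalBranch_of_finite (lam : Cardinal.{0}) (hunc : ℵ₀ < lam)
    (S : System lam) (κ : Cardinal.{0}) (hconst : ∀ α ∈ S.I, S.kappa α = κ)
    (hκfin : κ < ℵ₀) (hRfin : #S.Rels < ℵ₀) : S.HasCofinalBranch := by
  have hlamord : (0 : Ordinal) < lam.ord := by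
    have h1 : Cardinal.ord ℵ₀ ≤ lam.ord := Cardinal.ord_le_ord.2 hunc.le
    rw [Cardinal.ord_aleph0] at h1
    exact lt_of_lt_of_le Ordinal.omega0_pos h1
  obtain ⟨α₀, hα₀, -⟩ := S.I_unbounded 0 hlamord
  have hκpos : 0 < κ := by
    have := S.kappa_pos α₀ hα₀; rwa [hconst α₀ hα₀] at this
  have hκordpos : (0 : Ordinal) < κ.ord := by
    rwa [← Cardinal.ord_zero, Cardinal.ord_lt_ord]
  -- finiteness instances
  haveI hfinK : Finite ↥(Set.Iio κ.ord) := by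
    apply Cardinal.lt_aleph0_iff_finite.1
    rw [Ordinal.mk_Iio_ordinal, Cardinal.card_ord]
    exact Cardinal.lift_lt_aleph0.2 hκfin
  haveI hneK : Nonempty ↥(Set.Iio κ.ord) := ⟨⟨0, hκordpos⟩⟩
  haveI hfinR : Finite ↥S.Rels := Cardinal.lt_aleph0_iff_finite.1 hRfin
  haveI hneR : Nonempty ↥S.Rels := S.Rels_nonempty.to_subtype
  -- the tail filter on I
  set T : Ordinal → Set Ordinal := fun η => {γ | γ ∈ S.I ∧ η < γ} with hT
  haveI hneLam : Nonempty ↥(Set.Iio lam.ord) := ⟨⟨0, hlamord⟩⟩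
  set F : Filter Ordinal := ⨅ η : ↥(Set.Iio lam.ord), Filter.principal (T η.1) with hF
  haveI hFne : F.NeBot := by
    apply Filter.iInf_neBot_of_directed'
    · rintro ⟨η₁, h₁⟩ ⟨η₂, h₂⟩
      refine ⟨⟨max η₁ η₂, Set.mem_Iio.2 (max_lt (Set.mem_Iio.1 h₁) (Set.mem_Iio.1 h₂))⟩, ?_, ?_⟩ <;>
        · apply Filter.principal_mono.2
          rintro γ ⟨hγI, hγgt⟩
          refine ⟨hγI, lt_of_le_of_lt ?_ hγgt⟩
          first
          | exact le_max_left _ _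
          | exact le_max_right _ _
    · rintro ⟨η, hη⟩
      rw [Filter.principal_neBot_iff]
      obtain ⟨α, hα1, hα2⟩ := S.I_unbounded η hη
      exact ⟨α, hα1, hα2⟩
  set U : Ultrafilter Ordinal := Ultrafilter.of F with hU
  have hTU : ∀ η < lam.ord, T η ∈ U := by
    intro η hη
    have hs : T η ∈ F := Filter.mem_iInf_of_mem ⟨η, hη⟩ (Filter.mem_principal_self _)
    exact (Ultrafilter.of_le F) hs
  have hUn : ∀ s : Set Ordinal, s ∈ U → ∀ γ < lam.ord, ∃ x ∈ s, x ∈ S.I ∧ γ < x := by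
    intro s hs γ hγ
    obtain ⟨x, hx1, hx2, hx3⟩ := Ultrafilter.nonempty_of_mem (Filter.inter_mem hs (hTU γ hγ))
    exact ⟨x, hx1, hx2, hx3⟩
  -- witnesses for connectedness
  have hwit : ∀ α γ : Ordinal,
      ∃ v : ↥(Set.Iio κ.ord) × ↥(Set.Iio κ.ord) × ↥S.Rels,
        α ∈ S.I → γ ∈ S.I → α < γ → v.2.2.1 (α, v.1.1) (γ, v.2.1.1) := by
    intro α γ
    by_cases h : α ∈ S.I ∧ γ ∈ S.I ∧ α < γ
    · obtain ⟨β₀, hβ₀, β₁, hβ₁, R, hR, hrel⟩ := S.connected α h.1 γ h.2.1 h.2.2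
      rw [hconst α h.1] at hβ₀
      rw [hconst γ h.2.1] at hβ₁
      exact ⟨⟨⟨β₀, hβ₀⟩, ⟨β₁, hβ₁⟩, ⟨R, hR⟩⟩, fun _ _ _ => hrel⟩
    · exact ⟨Classical.arbitrary _, fun h1 h2 h3 => absurd ⟨h1, h2, h3⟩ h⟩
  choose g hg using hwit
  -- first ultrafilter limit: stabilize the witness for each α
  choose v hv using fun α => exists_ulim U (g α)
  -- second pigeonhole over α: stabilize the top coordinate and relation
  obtain ⟨w, hwU⟩ := exists_ulim U (fun α => ((v α).2.1, (v α).2.2))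
  set B : Set Ordinal := T 0 ∩ {α | ((v α).2.1, (v α).2.2) = w} with hB
  have hBU : B ∈ U := Filter.inter_mem (hTU 0 hlamord) hwU
  set b : Set (Ordinal × Ordinal) :=
    {p | p.1 ∈ B ∧ p.2 = ((v p.1).1.1 : Ordinal)} with hb
  -- key comparability
  have hkey : ∀ p ∈ b, ∀ q ∈ b, p.1 < q.1 →
      p = q ∨ w.2.1 p q ∨ w.2.1 q p := by
    rintro p ⟨hpB, hp2⟩ q ⟨hqB, hq2⟩ hlt
    have hpI : p.1 ∈ S.I := hpB.1.1
    have hqI : q.1 ∈ S.I := hqB.1.1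
    have hqlt : q.1 < lam.ord := S.I_lt _ hqI
    have hmem : ({γ | g p.1 γ = v p.1} ∩ {γ | g q.1 γ = v q.1}) ∩ T q.1 ∈ U :=
      Filter.inter_mem (Filter.inter_mem (hv p.1) (hv q.1)) (hTU q.1 hqlt)
    obtain ⟨γ, ⟨hgp, hgq⟩, hγI, hγgt⟩ := Ultrafilter.nonempty_of_mem hmem
    have hrp := hg p.1 γ hpI hγI (hlt.trans hγgt)
    have hrq := hg q.1 γ hqI hγI hγgt
    rw [hgp] at hrp
    rw [hgq] at hrq
    -- rewrite via agreement with w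
    have ep1 : (v p.1).2.1 = w.1 := (Prod.ext_iff.1 hpB.2).1
    have ep2 : (v p.1).2.2 = w.2 := (Prod.ext_iff.1 hpB.2).2
    have eq1 : (v q.1).2.1 = w.1 := (Prod.ext_iff.1 hqB.2).1
    have eq2 : (v q.1).2.2 = w.2 := (Prod.ext_iff.1 hqB.2).2
    rw [ep1, ep2] at hrp
    rw [eq1, eq2] at hrq
    have := S.rel_treeLike w.2.1 w.2.2 _ _ _ hrp hrq
    rcases this with heq | h | h
    · left
      exact absurd (Prod.ext_iff.1 heq).1 hlt.ne
    · right; left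
      have hpe : p = (p.1, ((v p.1).1.1 : Ordinal)) := Prod.ext rfl hp2
      have hqe : q = (q.1, ((v q.1).1.1 : Ordinal)) := Prod.ext rfl hq2
      rw [hpe, hqe]; exact h
    · right; right
      have hpe : p = (p.1, ((v p.1).1.1 : Ordinal)) := Prod.ext rfl hp2
      have hqe : q = (q.1, ((v q.1).1.1 : Ordinal)) := Prod.ext rfl hq2
      rw [hpe, hqe]; exact h
  refine ⟨w.2.1, b, ⟨⟨w.2.2, ?_, ?_⟩, ?_⟩⟩
  · rintro u ⟨huB, hu2⟩
    refine ⟨huB.1.1, ?_⟩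
    rw [hconst _ huB.1.1, hu2]
    exact (v u.1).1.2
  · intro p hp q hq
    rcases lt_trichotomy p.1 q.1 with hlt | heq | hgt
    · exact hkey p hp q hq hlt
    · left
      have hp2 := hp.2
      have hq2 := hq.2
      have : p.2 = q.2 := by rw [hp2, hq2, heq]
      exact Prod.ext heq this
    · rcases hkey q hq p hp hgt with h | h | h
      · exact Or.inl h.symm
      · exact Or.inr (Or.inr h)
      · exact Or.inr (Or.inl h)
  · intro γ hγ
    obtain ⟨α, hαB, hαI, hγα⟩ := hUn B hBU γ hγ
    exact ⟨(α, ((v α).1.1 : Ordinal)), ⟨hαB, rfl⟩, hγα⟩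

end Helpers

/-- Proposition 2.6: if `S = ⟨I × κ, 𝓡⟩` is a `lam`-system with no cofinal
branch and `κ' = width(S)`, then there is a `lam`-system
`S' = ⟨I × κ', 𝓡'⟩` with no cofinal branch such that `|𝓡'| = 1`. -/
theorem statement0 (lam : Cardinal.{0}) (hreg : lam.IsRegular) (hunc : ℵ₀ < lam)
    (S : System lam) (κ : Cardinal.{0}) (hconst : ∀ α ∈ S.I, S.kappa α = κ)
    (hnb : ¬ S.HasCofinalBranch)
    (κ' : Cardinal.{0}) (hw : Cardinal.lift.{1} κ' = S.width) :
    ∃ S' : System lam, S'.I = S.I ∧ (∀ α ∈ S'.I, S'.kappa α = κ') ∧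
      (∃ R, S'.Rels = {R}) ∧ ¬ S'.HasCofinalBranch := by
  have hlamord : (0 : Ordinal) < lam.ord := by
    have h1 : Cardinal.ord ℵ₀ ≤ lam.ord := Cardinal.ord_le_ord.2 hunc.le
    rw [Cardinal.ord_aleph0] at h1
    exact lt_of_lt_of_le Ordinal.omega0_pos h1
  obtain ⟨α₀, hα₀, -⟩ := S.I_unbounded 0 hlamord
  haveI hIne : Nonempty ↥S.I := ⟨⟨α₀, hα₀⟩⟩
  have hκpos : 0 < κ := by
    have := S.kappa_pos α₀ hα₀; rwa [hconst α₀ hα₀] at this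
  have hκlt : κ < lam := by
    have := S.kappa_lt α₀ hα₀; rwa [hconst α₀ hα₀] at this
  have hsup : (⨆ α : S.I, Cardinal.lift.{1} (S.kappa α.1)) = Cardinal.lift.{1} κ := by
    apply le_antisymm
    · exact ciSup_le fun α => by rw [hconst α.1 α.2]
    · have h := le_ciSup (Cardinal.bddAbove_range
        (fun α : S.I => Cardinal.lift.{1} (S.kappa α.1))) (⟨α₀, hα₀⟩ : ↥S.I)
      rwa [hconst α₀ hα₀] at h
  have hwidth : Cardinal.lift.{1} κ' = max (Cardinal.lift.{1} κ) #S.Rels := by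
    rw [hw, System.width, hsup]
  have hκκ' : κ ≤ κ' := by
    have : Cardinal.lift.{1} κ ≤ Cardinal.lift.{1} κ' := by
      rw [hwidth]; exact le_max_left _ _
    exact Cardinal.lift_le.1 this
  have hRelsle : #S.Rels ≤ Cardinal.lift.{1} κ' := by
    rw [hwidth]; exact le_max_right _ _
  have hκ'lt : κ' < lam := by
    have : Cardinal.lift.{1} κ' < Cardinal.lift.{1} lam := by
      rw [hwidth]
      exact max_lt (Cardinal.lift_lt.2 hκlt) S.Rels_lt
    exact Cardinal.lift_lt.1 this
  have hκ'pos : 0 < κ' := lt_of_lt_of_le hκpos hκκ'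
  have hκ'ordpos : (0 : Ordinal) < κ'.ord := by
    rwa [← Cardinal.ord_zero, Cardinal.ord_lt_ord]
  have hκordpos : (0 : Ordinal) < κ.ord := by
    rwa [← Cardinal.ord_zero, Cardinal.ord_lt_ord]
  by_cases hinf : ℵ₀ ≤ κ'
  swap
  · -- finite width: S has a cofinal branch, contradiction
    exfalso
    apply hnb
    apply S.hasCofinalBranch_of_finite lam hunc κ hconst
    · exact lt_of_le_of_lt hκκ' (not_le.1 hinf)
    · exact lt_of_le_of_lt hRelsle (Cardinal.lift_lt_aleph0.2 (not_le.1 hinf))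
  -- main case: κ' is infinite
  have hcard : #(↥S.Rels × ↥(Set.Iio κ.ord)) ≤ #(↥(Set.Iio κ'.ord)) := by
    rw [Cardinal.mk_prod, Ordinal.mk_Iio_ordinal, Ordinal.mk_Iio_ordinal,
      Cardinal.card_ord, Cardinal.card_ord, Cardinal.lift_id, Cardinal.lift_id]
    calc #S.Rels * Cardinal.lift.{1} κ
        ≤ Cardinal.lift.{1} κ' * Cardinal.lift.{1} κ' :=
          mul_le_mul' hRelsle (Cardinal.lift_le.2 hκκ')
      _ = Cardinal.lift.{1} κ' := Cardinal.mul_eq_self (Cardinal.aleph0_le_lift.2 hinf)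
  obtain ⟨e⟩ := Cardinal.le_def _ _ |>.1 hcard
  set R' : (Ordinal × Ordinal) → (Ordinal × Ordinal) → Prop := fun p q =>
    p.1 ∈ S.I ∧ q.1 ∈ S.I ∧ ∃ (R : ↥S.Rels) (c d : ↥(Set.Iio κ.ord)),
      p.2 = (e (R, c)).1 ∧ q.2 = (e (R, d)).1 ∧ R.1 (p.1, c.1) (q.1, d.1) with hR'def
  have hR'inc : ∀ p q, R' p q → p.1 < q.1 := by
    rintro p q ⟨-, -, R, c, d, -, -, h3⟩
    exact S.rel_increasing R.1 R.2 (p.1, c.1) (q.1, d.1) h3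
  have hedec : ∀ (x y : ↥S.Rels × ↥(Set.Iio κ.ord)), (e x).1 = (e y).1 → x = y :=
    fun x y h => e.injective (Subtype.ext h)
  refine ⟨{ I := S.I, kappa := fun _ => κ', Rels := Set.singleton R',
            I_lt := S.I_lt, I_unbounded := S.I_unbounded,
            kappa_pos := fun α _ => hκ'pos, kappa_lt := fun α _ => hκ'lt,
            Rels_nonempty := ⟨R', rfl⟩,
            Rels_lt := ?_, rel_mem := ?_, rel_trans := ?_, rel_treeLike := ?_,
            rel_increasing := ?_, connected := ?_ }, rfl, fun _ _ => rfl, ⟨R', rfl⟩, ?_⟩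
  · rw [show Set.singleton R' = ({R'} : Set ((Ordinal × Ordinal) → (Ordinal × Ordinal) → Prop)) from rfl,
      Cardinal.mk_singleton]
    exact lt_of_lt_of_le Cardinal.one_lt_aleph0 (Cardinal.aleph0_le_lift.2 hunc.le)
  · rintro R hR u v huv
    obtain rfl : R = R' := hR
    obtain ⟨h1, h2, Rw, c, d, hc, hd, -⟩ := huv
    refine ⟨⟨h1, ?_⟩, h2, ?_⟩
    · rw [hc]; exact (e (Rw, c)).2
    · rw [hd]; exact (e (Rw, d)).2
  · rintro R hR u v w huv hvw
    obtain rfl : R = R' := hR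
    obtain ⟨hu1, hv1, R₁, c₁, d₁, hc₁, hd₁, hr₁⟩ := huv
    obtain ⟨-, hw1, R₂, c₂, d₂, hc₂, hd₂, hr₂⟩ := hvw
    have heq : (R₁, d₁) = (R₂, c₂) := hedec _ _ (hd₁.symm.trans hc₂)
    injection heq with hRe hde
    subst hRe
    subst hde
    exact ⟨hu1, hw1, R₁, c₁, d₂, hc₁, hd₂,
      S.rel_trans R₁.1 R₁.2 (u.1, c₁.1) (v.1, d₁.1) (w.1, d₂.1) hr₁ hr₂⟩
  · rintro R hR u v w huw hvw
    obtain rfl : R = R' := hR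
    obtain ⟨hu1, hw1, R₁, c₁, d₁, hc₁, hd₁, hr₁⟩ := huw
    obtain ⟨hv1, -, R₂, c₂, d₂, hc₂, hd₂, hr₂⟩ := hvw
    have heq : (R₁, d₁) = (R₂, d₂) := hedec _ _ (hd₁.symm.trans hd₂)
    injection heq with hRe hde
    subst hRe
    subst hde
    rcases S.rel_treeLike R₁.1 R₁.2 (u.1, c₁.1) (v.1, c₂.1) (w.1, d₁.1) hr₁ hr₂ with h | h | h
    · left
      injection h with h1 h2
      have hc : c₁ = c₂ := Subtype.ext h2
      subst hc
      exact Prod.ext h1 (hc₁.trans hc₂.symm)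
    · exact Or.inr (Or.inl ⟨hu1, hv1, R₁, c₁, c₂, hc₁, hc₂, h⟩)
    · exact Or.inr (Or.inr ⟨hv1, hu1, R₁, c₂, c₁, hc₂, hc₁, h⟩)
  · rintro R hR u v huv
    obtain rfl : R = R' := hR
    exact hR'inc u v huv
  · intro a₀ ha₀ a₁ ha₁ hlt
    obtain ⟨β₀, hβ₀, β₁, hβ₁, R, hRmem, hrel⟩ := S.connected a₀ ha₀ a₁ ha₁ hlt
    rw [hconst a₀ ha₀] at hβ₀
    rw [hconst a₁ ha₁] at hβ₁
    refine ⟨(e (⟨R, hRmem⟩, ⟨β₀, hβ₀⟩)).1, (e _).2, (e (⟨R, hRmem⟩, ⟨β₁, hβ₁⟩)).1, (e _).2,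
      R', rfl, ?_⟩
    exact ⟨ha₀, ha₁, ⟨R, hRmem⟩, ⟨β₀, hβ₀⟩, ⟨β₁, hβ₁⟩, rfl, rfl, hrel⟩
  -- no cofinal branch
  · rintro ⟨R'', b, ⟨⟨hR''mem, hmem, hcomp⟩, hcof⟩⟩
    obtain rfl : R'' = R' := hR''mem
    haveI : Nonempty (↥S.Rels × ↥(Set.Iio κ.ord)) :=
      ⟨⟨Classical.choice S.Rels_nonempty.to_subtype, ⟨0, hκordpos⟩⟩⟩
    have hstep : ∀ u ∈ b, ∀ v ∈ b, u.1 < v.1 → R' u v := by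
      intro u hu v hv hlt
      rcases hcomp u hu v hv with he | h | h
      · exact absurd (congrArg Prod.fst he) hlt.ne
      · exact h
      · exact absurd (hR'inc v u h) (asymm hlt)
    have hPex : ∀ u : Ordinal × Ordinal, u ∈ b →
        ∃ Rc : ↥S.Rels × ↥(Set.Iio κ.ord), u.2 = (e Rc).1 := by
      intro u hu
      have hu1lt : u.1 < lam.ord := S.I_lt _ (hmem u hu).1
      obtain ⟨v, hv, hgt⟩ := hcof u.1 hu1lt
      obtain ⟨-, -, R, c, d, h1, -, -⟩ := hstep u hu v hv hgt
      exact ⟨(R, c), h1⟩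
    choose! dec hdec using hPex
    have hcoh : ∀ u ∈ b, ∀ v ∈ b, u.1 < v.1 →
        (dec u).1 = (dec v).1 ∧ (dec u).1.1 (u.1, (dec u).2.1) (v.1, (dec v).2.1) := by
      intro u hu v hv hlt
      obtain ⟨-, -, R, c, d, h1, h2, h3⟩ := hstep u hu v hv hlt
      have e1 : dec u = (R, c) := hedec _ _ ((hdec u hu).symm.trans h1)
      have e2 : dec v = (R, d) := hedec _ _ ((hdec v hv).symm.trans h2)
      rw [e1, e2]
      exact ⟨rfl, h3⟩
    obtain ⟨u₀, hu₀, -⟩ := hcof 0 hlamord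
    have heqcase : ∀ u ∈ b, ∀ v ∈ b, u.1 = v.1 → u = v := by
      intro u hu v hv he
      rcases hcomp u hu v hv with h | h | h
      · exact h
      · exact absurd (hR'inc u v h) (he ▸ lt_irrefl _)
      · exact absurd (hR'inc v u h) (he ▸ lt_irrefl _)
    have hsame : ∀ u ∈ b, (dec u).1 = (dec u₀).1 := by
      intro u hu
      rcases lt_trichotomy u.1 u₀.1 with h | h | h
      · exact (hcoh u hu u₀ hu₀ h).1
      · rw [heqcase u hu u₀ hu₀ h]
      · exact ((hcoh u₀ hu₀ u hu h).1).symm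
    apply hnb
    refine ⟨(dec u₀).1.1, {p | ∃ u ∈ b, p = (u.1, ((dec u).2.1 : Ordinal))},
      ⟨⟨(dec u₀).1.2, ?_, ?_⟩, ?_⟩⟩
    · rintro p ⟨u, hu, rfl⟩
      refine ⟨(hmem u hu).1, ?_⟩
      rw [hconst _ (hmem u hu).1]
      exact (dec u).2.2
    · rintro p ⟨u, hu, rfl⟩ q ⟨v, hv, rfl⟩
      rcases lt_trichotomy u.1 v.1 with h | h | h
      · right; left
        have hc := (hcoh u hu v hv h).2
        rwa [hsame u hu] at hc
      · left
        rw [heqcase u hu v hv h]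
      · right; right
        have hc := (hcoh v hv u hu h).2
        rwa [hsame v hv] at hc
    · intro γ hγ
      obtain ⟨u, hu, hgt⟩ := hcof γ hγ
      exact ⟨(u.1, ((dec u).2.1 : Ordinal)), ⟨u, hu, rfl⟩, hgt⟩

end Paper
end
end

section
/- Suppose λ is an uncountable regular cardinal such that for every cardinal κ < λ the partition relation λ → (λ)²_κ holds (i.e., every function f : [λ]² → κ is constant on [H]² for some H ⊆ λ of cardinality λ). Then NSP(λ) holds: every narrow λ-system has a cofinal branch. In particular, if λ is weakly compact then NSP(λ) holds. -/
noncomputable section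

open Cardinal Set

namespace Paper

/-- The narrow system property at `lam`: every narrow `lam`-system has a
cofinal branch. -/
def NSP (lam : Cardinal.{0}) : Prop :=
  ∀ S : System lam, S.IsNarrow → S.HasCofinalBranch

/-- Proposition 2.9: if `lam` is an uncountable regular cardinal satisfying
`lam → (lam)²_κ` for every `κ < lam`, then `NSP(lam)` holds.  (In particular
this applies when `lam` is weakly compact.) -/
theorem statement1 (lam : Cardinal.{0}) (hreg : lam.IsRegular) (hunc : ℵ₀ < lam)
    (hpart : ∀ κ : Cardinal.{0}, κ < lam → ∀ f : Ordinal → Ordinal → Ordinal,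
      (∀ α β, α < β → β < lam.ord → f α β < κ.ord) →
      ∃ (H : Set Ordinal) (c : Ordinal), H ⊆ Set.Iio lam.ord ∧
        #H = Cardinal.lift.{1} lam ∧
        ∀ α ∈ H, ∀ β ∈ H, α < β → f α β = c) :
    NSP lam := by
  classical
  intro S hnarrow
  have hwidth : S.width < Cardinal.lift.{1} lam :=
    lt_of_le_of_lt (Order.le_succ _) hnarrow
  obtain ⟨ν, hνlt, hνeq⟩ := Cardinal.lt_lift_iff.mp hwidth
  set κ : Cardinal := max ν ℵ₀ with hκdef
  have hκlt : κ < lam := max_lt hνlt hunc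
  have hκinf : ℵ₀ ≤ κ := le_max_right _ _
  have hκord : Order.IsSuccLimit κ.ord := Cardinal.isSuccLimit_ord hκinf
  have hlamord : Order.IsSuccLimit lam.ord := Cardinal.isSuccLimit_ord hunc.le
  -- κ_α ≤ ν for α ∈ I
  have hkν : ∀ α ∈ S.I, S.kappa α ≤ ν := by
    intro α hα
    have h1 : Cardinal.lift.{1} (S.kappa α) ≤ ⨆ β : S.I, Cardinal.lift.{1} (S.kappa β.1) :=
      le_ciSup (Cardinal.bddAbove_range _) (⟨α, hα⟩ : S.I)
    have h2 : (⨆ β : S.I, Cardinal.lift.{1} (S.kappa β.1)) ≤ S.width := le_max_left _ _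
    have : Cardinal.lift.{1} (S.kappa α) ≤ Cardinal.lift.{1} ν := by
      rw [hνeq]; exact h1.trans h2
    exact Cardinal.lift_le.mp this
  have hRelsν : #S.Rels ≤ Cardinal.lift.{1} ν := by
    rw [hνeq]; exact le_max_right _ _
  -- the "push up into I" function
  choose gfun hgI hggt using S.I_unbounded
  set G : Ordinal → Ordinal := fun γ => if h : γ < lam.ord then gfun γ h else 0 with hGdef
  have hG : ∀ γ, γ < lam.ord → γ < G γ ∧ G γ ∈ S.I ∧ G γ < lam.ord := by
    intro γ h
    have hGγ : G γ = gfun γ h := by rw [hGdef]; exact dif_pos h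
    rw [hGγ]
    exact ⟨hggt γ h, hgI γ h, S.I_lt _ (hgI γ h)⟩
  -- the coding domain and an injection into ordinals below κ.ord
  have hD : #((↥(Set.Iio ν.ord) × ↥(Set.Iio ν.ord)) × ↥S.Rels) ≤ #(↥(Set.Iio κ.ord)) := by
    have h1 : #(↥(Set.Iio ν.ord)) = Cardinal.lift.{1} ν := by
      rw [Ordinal.mk_Iio_ordinal, Cardinal.card_ord]
    have h2 : #(↥(Set.Iio κ.ord)) = Cardinal.lift.{1} κ := by
      rw [Ordinal.mk_Iio_ordinal, Cardinal.card_ord]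
    have hνκ : Cardinal.lift.{1} ν ≤ Cardinal.lift.{1} κ :=
      Cardinal.lift_le.mpr (le_max_left _ _)
    have hinf : ℵ₀ ≤ Cardinal.lift.{1} κ := Cardinal.aleph0_le_lift.mpr hκinf
    rw [Cardinal.mk_prod, Cardinal.mk_prod, h1, h2, Cardinal.lift_id, Cardinal.lift_id,
      Cardinal.lift_id]
    calc Cardinal.lift.{1} ν * Cardinal.lift.{1} ν * #S.Rels
        ≤ Cardinal.lift.{1} κ * Cardinal.lift.{1} κ * Cardinal.lift.{1} κ := by
          exact mul_le_mul' (mul_le_mul' hνκ hνκ) (hRelsν.trans hνκ)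
      _ = Cardinal.lift.{1} κ := by
          rw [Cardinal.mul_eq_self hinf, Cardinal.mul_eq_self hinf]
  obtain ⟨e⟩ := Cardinal.le_def _ _ |>.mp hD
  -- choice of connecting data
  have conn' : ∀ α β : Ordinal, α < β → β < lam.ord → G α < G β →
      ∃ d : (↥(Set.Iio ν.ord) × ↥(Set.Iio ν.ord)) × ↥S.Rels,
        (d.2.1) (G α, d.1.1.1) (G β, d.1.2.1) := by
    intro α β hab hb hGG
    have ha : α < lam.ord := hab.trans hb
    obtain ⟨_, h2a, _⟩ := hG α ha
    obtain ⟨_, h2b, _⟩ := hG β hb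
    obtain ⟨x₀, hx₀, x₁, hx₁, R, hR, hrel⟩ := S.connected _ h2a _ h2b hGG
    have hb0 : x₀ < ν.ord := hx₀.trans_le (Cardinal.ord_le_ord.mpr (hkν _ h2a))
    have hb1 : x₁ < ν.ord := hx₁.trans_le (Cardinal.ord_le_ord.mpr (hkν _ h2b))
    exact ⟨⟨⟨⟨x₀, hb0⟩, ⟨x₁, hb1⟩⟩, ⟨R, hR⟩⟩, hrel⟩
  choose dfun hdfun using conn'
  -- the coloring
  set f : Ordinal → Ordinal → Ordinal := fun α β =>
    if h : α < β ∧ β < lam.ord ∧ G α < G β then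
      (e (dfun α β h.1 h.2.1 h.2.2)).1 + 1
    else 0 with hfdef
  have hfpos : ∀ α β (h : α < β ∧ β < lam.ord ∧ G α < G β),
      f α β = (e (dfun α β h.1 h.2.1 h.2.2)).1 + 1 := by
    intro α β h; rw [hfdef]; exact dif_pos h
  have hfneg : ∀ α β, ¬(α < β ∧ β < lam.ord ∧ G α < G β) → f α β = 0 := by
    intro α β h; rw [hfdef]; exact dif_neg h
  have hf : ∀ α β, α < β → β < lam.ord → f α β < κ.ord := by
    intro α β h1 h2
    by_cases h : α < β ∧ β < lam.ord ∧ G α < G β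
    · rw [hfpos α β h, Ordinal.add_one_eq_succ]
      exact hκord.succ_lt (e (dfun α β h.1 h.2.1 h.2.2)).2
    · rw [hfneg α β h]; exact hκord.pos
  obtain ⟨H, c, hHsub, hHcard, hhom⟩ := hpart κ hκlt f hf
  -- H is unbounded in lam.ord
  have hHunb : ∀ γ, γ < lam.ord → ∃ α ∈ H, γ < α := by
    intro γ hγ
    by_contra hcon
    push_neg at hcon
    have hsub : H ⊆ Set.Iio (Order.succ γ) := fun α hα =>
      lt_of_le_of_lt (hcon α hα) (Order.lt_succ γ)
    have hle : #H ≤ #(Set.Iio (Order.succ γ)) := Cardinal.mk_le_mk_of_subset hsub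
    rw [hHcard, Ordinal.mk_Iio_ordinal] at hle
    have hlt : (Order.succ γ).card < lam := Cardinal.lt_ord.mp (hlamord.succ_lt hγ)
    exact absurd hle (not_le.mpr (Cardinal.lift_lt.mpr hlt))
  -- a base pair
  obtain ⟨α₀, hα₀H, _⟩ := hHunb 0 hlamord.pos
  have hα₀ : α₀ < lam.ord := hHsub hα₀H
  obtain ⟨β₀, hβ₀H, hβ₀gt⟩ := hHunb (G α₀) (hG α₀ hα₀).2.2
  have hβ₀l : β₀ < lam.ord := hHsub hβ₀H
  have hpair : α₀ < β₀ ∧ β₀ < lam.ord ∧ G α₀ < G β₀ :=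
    ⟨(hG α₀ hα₀).1.trans hβ₀gt, hβ₀l, hβ₀gt.trans (hG β₀ hβ₀l).1⟩
  have hc0 : c ≠ 0 := by
    have hcc := hhom α₀ hα₀H β₀ hβ₀H hpair.1
    rw [hfpos α₀ β₀ hpair, Ordinal.add_one_eq_succ] at hcc
    rw [← hcc]
    exact Ordinal.succ_ne_zero _
  -- every pair from H satisfies the condition
  have hcond : ∀ α ∈ H, ∀ β ∈ H, α < β → α < β ∧ β < lam.ord ∧ G α < G β := by
    intro α hα β hβ hab
    by_contra h
    have hcc := hhom α hα β hβ hab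
    rw [hfneg α β h] at hcc
    exact hc0 hcc.symm
  -- the connecting data is constant on H
  set d₀ := dfun α₀ β₀ hpair.1 hpair.2.1 hpair.2.2 with hd₀def
  have hdconst : ∀ α (hα : α ∈ H) β (hβ : β ∈ H) (hab : α < β),
      dfun α β hab (hcond α hα β hβ hab).2.1 (hcond α hα β hβ hab).2.2 = d₀ := by
    intro α hα β hβ hab
    have h := hcond α hα β hβ hab
    have h1 := hhom α hα β hβ hab
    have h2 := hhom α₀ hα₀H β₀ hβ₀H hpair.1
    rw [hfpos α β h] at h1
    rw [hfpos α₀ β₀ hpair] at h2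
    have heq : (e (dfun α β h.1 h.2.1 h.2.2)).1 + 1 = (e d₀).1 + 1 := by
      rw [hd₀def, h1, h2]
    rw [Ordinal.add_one_eq_succ, Ordinal.add_one_eq_succ] at heq
    have hv : (e (dfun α β h.1 h.2.1 h.2.2)).1 = (e d₀).1 := Order.succ_injective heq
    exact e.injective (Subtype.ext hv)
  set R := d₀.2.1 with hRdef
  set b₀ := d₀.1.1.1 with hb₀def
  set b₁ := d₀.1.2.1 with hb₁def
  have hdR : ∀ α ∈ H, ∀ β ∈ H, α < β → R (G α, b₀) (G β, b₁) := by
    intro α hα β hβ hab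
    have h := hcond α hα β hβ hab
    have := hdfun α β h.1 h.2.1 h.2.2
    rw [hdconst α hα β hβ hab] at this
    exact this
  have hRmem : R ∈ S.Rels := d₀.2.2
  -- membership of branch points in the system
  have hmem : ∀ α ∈ H, G α ∈ S.I ∧ b₀ < (S.kappa (G α)).ord := by
    intro α hα
    have hαl : α < lam.ord := hHsub hα
    obtain ⟨β, hβ, hβgt⟩ := hHunb (G α) (hG α hαl).2.2
    have hab : α < β := (hG α hαl).1.trans hβgt
    have := S.rel_mem R hRmem _ _ (hdR α hα β hβ hab)
    exact this.1
  refine ⟨R, {p | ∃ α ∈ H, p = (G α, b₀)}, ⟨hRmem, ?_, ?_⟩, ?_⟩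
  · rintro u ⟨α, hα, rfl⟩
    exact hmem α hα
  · rintro u ⟨α, hα, rfl⟩ v ⟨β, hβ, rfl⟩
    rcases lt_trichotomy α β with hab | hab | hab
    · -- find γ above both images
      have hαl : α < lam.ord := hHsub hα
      have hβl : β < lam.ord := hHsub hβ
      have hmaxl : max (G α) (G β) < lam.ord :=
        max_lt (hG α hαl).2.2 (hG β hβl).2.2
      obtain ⟨γ, hγ, hγgt⟩ := hHunb (max (G α) (G β)) hmaxl
      have haγ : α < γ := (hG α hαl).1.trans (lt_of_le_of_lt (le_max_left _ _) hγgt)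
      have hbγ : β < γ := (hG β hβl).1.trans (lt_of_le_of_lt (le_max_right _ _) hγgt)
      exact S.rel_treeLike R hRmem _ _ _ (hdR α hα γ hγ haγ) (hdR β hβ γ hγ hbγ)
    · subst hab; exact Or.inl rfl
    · have hαl : α < lam.ord := hHsub hα
      have hβl : β < lam.ord := hHsub hβ
      have hmaxl : max (G α) (G β) < lam.ord :=
        max_lt (hG α hαl).2.2 (hG β hβl).2.2
      obtain ⟨γ, hγ, hγgt⟩ := hHunb (max (G α) (G β)) hmaxl
      have haγ : α < γ := (hG α hαl).1.trans (lt_of_le_of_lt (le_max_left _ _) hγgt)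
      have hbγ : β < γ := (hG β hβl).1.trans (lt_of_le_of_lt (le_max_right _ _) hγgt)
      rcases S.rel_treeLike R hRmem _ _ _ (hdR β hβ γ hγ hbγ) (hdR α hα γ hγ haγ) with
        h | h | h
      · exact Or.inl h.symm
      · exact Or.inr (Or.inr h)
      · exact Or.inr (Or.inl h)
  · intro γ hγ
    obtain ⟨α, hα, hαgt⟩ := hHunb γ hγ
    have hαl : α < lam.ord := hHsub hα
    exact ⟨(G α, b₀), ⟨α, hα, rfl⟩, hαgt.trans (hG α hαl).1⟩

end Paper
end
end

section
/- Suppose λ is an uncountable regular cardinal such that every λ-complete filter on any set can be extended to a λ-complete ultrafilter (this holds when λ is strongly compact). Then NSP(λ, ≥λ) holds: every narrow system of width < λ whose height is a regular cardinal μ ≥ λ has a cofinal branch. -/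
noncomputable section

open Cardinal Set

namespace Paper

/-- A filter `F` is `lam`-complete: it is closed under intersections of
fewer than `lam` of its members. -/
def IsLamCompleteFilter (lam : Cardinal.{0}) {σ : Type 1} (F : Filter σ) : Prop :=
  ∀ (ι : Type 1) (s : ι → Set σ), #ι < Cardinal.lift.{1} lam →
    (∀ i, s i ∈ F) → (⋂ i, s i) ∈ F

/-- Auxiliary: a supremum of fewer than `ν` many ordinals below `ν.ord` is
below `ν.ord`, for `ν` regular (index type in `Type 1`). -/
private lemma supAux {ν : Cardinal.{0}} (hν : ν.IsRegular) {ι : Type 1}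
    (hι : #ι < Cardinal.lift.{1} ν) (f : ι → Ordinal.{0}) (hf : ∀ i, f i < ν.ord) :
    (⨆ i, f i) < ν.ord := by
  have hsub : Set.range f ⊆ Set.Iio ν.ord := by
    rintro _ ⟨i, rfl⟩; exact hf i
  haveI hsm : Small.{0} (Set.range f) := small_subset hsub
  let g : Shrink.{0} (Set.range f) → Ordinal.{0} :=
    fun x => ((equivShrink (Set.range f)).symm x : Ordinal)
  have hrange : Set.range g = Set.range f := by
    ext o
    constructor
    · rintro ⟨x, rfl⟩
      exact ((equivShrink (Set.range f)).symm x).2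
    · intro ho
      exact ⟨equivShrink (Set.range f) ⟨o, ho⟩, by simp [g]⟩
  have hcard : #(Shrink.{0} (Set.range f)) < ν.ord.cof := by
    rw [hν.cof_eq]
    have h1 : Cardinal.lift.{1} #(Shrink.{0} (Set.range f)) = #(Set.range f) :=
      Cardinal.lift_mk_shrink'' _
    have h2 : #(Set.range f) < Cardinal.lift.{1} ν := lt_of_le_of_lt Cardinal.mk_range_le hι
    have h3 : Cardinal.lift.{1} #(Shrink.{0} (Set.range f)) < Cardinal.lift.{1} ν := h1 ▸ h2
    exact Cardinal.lift_lt.mp h3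
  have hg : ∀ x, g x < ν.ord := fun x => hsub ((equivShrink (Set.range f)).symm x).2
  have hlt := Ordinal.iSup_lt_ord hcard hg
  calc (⨆ i, f i) = sSup (Set.range f) := rfl
    _ = sSup (Set.range g) := by rw [hrange]
    _ < ν.ord := hlt

/-- Auxiliary: a function into a set of size `< lam` is constant on a set in
any `lam`-complete ultrafilter. -/
private lemma constAux {lam : Cardinal.{0}} {σ : Type 1} (U : Ultrafilter σ)
    (hU : IsLamCompleteFilter lam (U : Filter σ)) {T : Type 1}
    (hT : #T < Cardinal.lift.{1} lam) (g : σ → T) :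
    ∃ t, {x | g x = t} ∈ (U : Filter σ) := by
  by_contra h
  push_neg at h
  have h' : ∀ t : T, {x | g x = t}ᶜ ∈ (U : Filter σ) := fun t =>
    (Ultrafilter.compl_mem_iff_notMem).mpr (h t)
  have hmem := hU T (fun t => {x | g x = t}ᶜ) hT h'
  obtain ⟨x, hx⟩ := Ultrafilter.nonempty_of_mem hmem
  exact (Set.mem_iInter.mp hx (g x)) rfl

/-- Proposition 2.10: if `lam` is an uncountable regular cardinal such that
every `lam`-complete filter extends to a `lam`-complete ultrafilter (which
holds when `lam` is strongly compact), then `NSP(lam, ≥lam)` holds: every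
narrow system of width `< lam` whose height is a regular cardinal `mu ≥ lam`
has a cofinal branch. -/
theorem statement2 (lam : Cardinal.{0}) (hreg : lam.IsRegular) (hunc : ℵ₀ < lam)
    (hext : ∀ (σ : Type 1) (F : Filter σ), F.NeBot → IsLamCompleteFilter lam F →
      ∃ U : Ultrafilter σ, F ≤ (U : Filter σ) ∧ IsLamCompleteFilter lam (U : Filter σ)) :
    ∀ mu : Cardinal.{0}, mu.IsRegular → lam ≤ mu →
      ∀ S : System mu, S.width < Cardinal.lift.{1} lam → S.IsNarrow →
        S.HasCofinalBranch := by
  intro mu hmu hlammu S hwidth _hnarrow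
  classical
  -- a uniform bound `w < lam` on the levels of `S`
  obtain ⟨w, hwlam, hwlift⟩ := Cardinal.lt_lift_iff.mp hwidth
  have hkw : ∀ α, α ∈ S.I → S.kappa α ≤ w := by
    intro α hα
    have h1 : Cardinal.lift.{1} (S.kappa α) ≤ ⨆ β : S.I, Cardinal.lift.{1} (S.kappa β.1) :=
      le_ciSup (Cardinal.bddAbove_range _) (⟨α, hα⟩ : S.I)
    have h2 : Cardinal.lift.{1} (S.kappa α) ≤ Cardinal.lift.{1} w := by
      rw [hwlift]
      exact h1.trans (le_max_left _ _)
    exact Cardinal.lift_le.mp h2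
  have hmupos : (0 : Ordinal) < mu.ord := by
    rw [← Cardinal.ord_zero]
    exact Cardinal.ord_lt_ord.mpr hmu.pos
  obtain ⟨α₀, hα₀, -⟩ := S.I_unbounded 0 hmupos
  have hwpos : (0 : Cardinal) < w := lt_of_lt_of_le (S.kappa_pos α₀ hα₀) (hkw α₀ hα₀)
  have hword : (0 : Ordinal) < w.ord := by
    rw [← Cardinal.ord_zero]
    exact Cardinal.ord_lt_ord.mpr hwpos
  have hRelsw : #S.Rels < Cardinal.lift.{1} lam := lt_of_le_of_lt (le_max_right _ _) hwidth
  have hliftlam : ℵ₀ ≤ Cardinal.lift.{1} lam := by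
    have h := Cardinal.lift_lt.{0,1}.mpr hunc
    rw [Cardinal.lift_aleph0] at h
    exact h.le
  have hprodcard : ∀ (A B : Type 1), #A < Cardinal.lift.{1} lam →
      #B < Cardinal.lift.{1} lam → #(A × B) < Cardinal.lift.{1} lam := by
    intro A B hA hB
    have h : #(A × B) = #A * #B := by
      rw [Cardinal.mk_prod, Cardinal.lift_id, Cardinal.lift_id]
    rw [h]
    exact Cardinal.mul_lt_of_lt hliftlam hA hB
  have hIio : ∀ c : Cardinal.{0}, #(Set.Iio c.ord) = Cardinal.lift.{1} c := by
    intro c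
    rw [Ordinal.mk_Iio_ordinal, Cardinal.card_ord]
  -- the tail filter on `I`
  set Tail : Ordinal → Set Ordinal := fun γ => {η | η ∈ S.I ∧ γ < η} with hTailDef
  let F : Filter Ordinal :=
    { sets := {A | ∃ γ < mu.ord, Tail γ ⊆ A}
      univ_sets := ⟨0, hmupos, fun _ _ => Set.mem_univ _⟩
      sets_of_superset := by
        rintro A B ⟨γ, hγ, hsub⟩ hAB
        exact ⟨γ, hγ, hsub.trans hAB⟩
      inter_sets := by
        rintro A B ⟨γ₁, hγ₁, h₁⟩ ⟨γ₂, hγ₂, h₂⟩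
        refine ⟨max γ₁ γ₂, max_lt hγ₁ hγ₂, fun η hη => ?_⟩
        exact ⟨h₁ ⟨hη.1, (le_max_left _ _).trans_lt hη.2⟩,
               h₂ ⟨hη.1, (le_max_right _ _).trans_lt hη.2⟩⟩ }
  have memF : ∀ A : Set Ordinal, A ∈ F ↔ ∃ γ < mu.ord, Tail γ ⊆ A := fun A => Iff.rfl
  have hFne : F.NeBot := by
    rw [← Filter.forall_mem_nonempty_iff_neBot]
    intro s hs
    obtain ⟨γ, hγ, hsub⟩ := (memF s).mp hs
    obtain ⟨α, hα, hγα⟩ := S.I_unbounded γ hγ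
    exact ⟨α, hsub ⟨hα, hγα⟩⟩
  have hFcomp : IsLamCompleteFilter lam F := by
    intro ι s hι hs
    choose γ hγ hsub using fun i => (memF _).mp (hs i)
    have hbdd : BddAbove (Set.range γ) := ⟨mu.ord, by rintro _ ⟨i, rfl⟩; exact (hγ i).le⟩
    refine (memF _).mpr
      ⟨⨆ i, γ i, supAux hmu (hι.trans_le (Cardinal.lift_le.mpr hlammu)) γ hγ, ?_⟩
    intro η hη
    exact Set.mem_iInter.mpr fun i => hsub i ⟨hη.1, (le_ciSup hbdd i).trans_lt hη.2⟩
  obtain ⟨U, hFU, hUcomp⟩ := hext Ordinal F hFne hFcomp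
  have hTailU : ∀ γ, γ < mu.ord → Tail γ ∈ (U : Filter Ordinal) := by
    intro γ hγ
    by_contra hnot
    have hcompl : (Tail γ)ᶜ ∈ (U : Filter Ordinal) := Ultrafilter.compl_mem_iff_notMem.mpr hnot
    have hmemFc : (Tail γ)ᶜ ∈ F := Filter.le_def.mp hFU _ hcompl
    obtain ⟨δ, hδ, hsub⟩ := (memF _).mp hmemFc
    obtain ⟨α, hα, hmax⟩ := S.I_unbounded (max γ δ) (max_lt hγ hδ)
    exact hsub ⟨hα, (le_max_right _ _).trans_lt hmax⟩ ⟨hα, (le_max_left _ _).trans_lt hmax⟩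
  obtain ⟨R₀, hR₀⟩ := S.Rels_nonempty
  -- For each `α ∈ I`, stabilize the connectedness witnesses on a `U`-large set
  have KEY : ∀ α, α ∈ S.I → ∃ R β γ B, B ∈ (U : Filter Ordinal) ∧ R ∈ S.Rels ∧
      β < (S.kappa α).ord ∧ γ < w.ord ∧
      ∀ η ∈ B, η ∈ S.I ∧ α < η ∧ R (α, β) (η, γ) := by
    intro α hα
    have hκpos : (0 : Ordinal) < (S.kappa α).ord := by
      rw [← Cardinal.ord_zero]
      exact Cardinal.ord_lt_ord.mpr (S.kappa_pos α hα)
    have conn : ∀ η : Ordinal, ∃ (β γ : Ordinal)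
        (R : (Ordinal × Ordinal) → (Ordinal × Ordinal) → Prop),
        (η ∈ S.I ∧ α < η) → β < (S.kappa α).ord ∧ γ < (S.kappa η).ord ∧
          R ∈ S.Rels ∧ R (α, β) (η, γ) := by
      intro η
      by_cases h : η ∈ S.I ∧ α < η
      · obtain ⟨β, hβ, γ, hγ, R, hR, hrel⟩ := S.connected α hα η h.1 h.2
        exact ⟨β, γ, R, fun _ => ⟨hβ, hγ, hR, hrel⟩⟩
      · exact ⟨0, 0, R₀, fun hc => absurd hc h⟩
    choose βc γc Rc hc using conn
    have hTcard : #(↥S.Rels × ↥(Set.Iio (S.kappa α).ord) × ↥(Set.Iio w.ord)) <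
        Cardinal.lift.{1} lam := by
      apply hprodcard _ _ hRelsw
      apply hprodcard
      · rw [hIio]
        exact Cardinal.lift_lt.mpr (lt_of_le_of_lt (hkw α hα) hwlam)
      · rw [hIio]
        exact Cardinal.lift_lt.mpr hwlam
    let g : Ordinal → ↥S.Rels × ↥(Set.Iio (S.kappa α).ord) × ↥(Set.Iio w.ord) := fun η =>
      if h : η ∈ S.I ∧ α < η then
        (⟨Rc η, (hc η h).2.2.1⟩, ⟨βc η, (hc η h).1⟩,
          ⟨γc η, lt_of_lt_of_le (hc η h).2.1 (Cardinal.ord_le_ord.mpr (hkw η h.1))⟩)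
      else (⟨R₀, hR₀⟩, ⟨0, hκpos⟩, ⟨0, hword⟩)
    obtain ⟨t, ht⟩ := constAux U hUcomp hTcard g
    have hαmu : α < mu.ord := S.I_lt α hα
    refine ⟨(t.1 : _), (t.2.1 : Ordinal), (t.2.2 : Ordinal),
      {x | g x = t} ∩ Tail α, Filter.inter_mem ht (hTailU α hαmu),
      t.1.2, t.2.1.2, t.2.2.2, ?_⟩
    rintro η ⟨hgη, hηI, hαη⟩
    have h : η ∈ S.I ∧ α < η := ⟨hηI, hαη⟩
    have he : ((⟨Rc η, (hc η h).2.2.1⟩, ⟨βc η, (hc η h).1⟩,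
        ⟨γc η, lt_of_lt_of_le (hc η h).2.1 (Cardinal.ord_le_ord.mpr (hkw η h.1))⟩) :
        ↥S.Rels × ↥(Set.Iio (S.kappa α).ord) × ↥(Set.Iio w.ord)) = t := by
      have he0 : g η = t := hgη
      simp only [g] at he0
      rw [dif_pos h] at he0
      exact he0
    have e1 : Rc η = (t.1 : (Ordinal × Ordinal) → (Ordinal × Ordinal) → Prop) :=
      congrArg (fun p : ↥S.Rels × ↥(Set.Iio (S.kappa α).ord) × ↥(Set.Iio w.ord) =>
        (p.1 : (Ordinal × Ordinal) → (Ordinal × Ordinal) → Prop)) he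
    have e2 : βc η = (t.2.1 : Ordinal) :=
      congrArg (fun p : ↥S.Rels × ↥(Set.Iio (S.kappa α).ord) × ↥(Set.Iio w.ord) =>
        (p.2.1 : Ordinal)) he
    have e3 : γc η = (t.2.2 : Ordinal) :=
      congrArg (fun p : ↥S.Rels × ↥(Set.Iio (S.kappa α).ord) × ↥(Set.Iio w.ord) =>
        (p.2.2 : Ordinal)) he
    refine ⟨hηI, hαη, ?_⟩
    have hrel := (hc η h).2.2.2
    rw [e1, e2, e3] at hrel
    exact hrel
  choose Rf βf γf Bf hKEY using KEY
  -- pigeonhole: fix the relation and the upper ordinal on an unbounded set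
  let hh : Ordinal → ↥S.Rels × ↥(Set.Iio w.ord) := fun α =>
    if hα : α ∈ S.I then (⟨Rf α hα, (hKEY α hα).2.1⟩, ⟨γf α hα, (hKEY α hα).2.2.2.1⟩)
    else (⟨R₀, hR₀⟩, ⟨0, hword⟩)
  have hhcard : #(↥S.Rels × ↥(Set.Iio w.ord)) < Cardinal.lift.{1} lam := by
    apply hprodcard _ _ hRelsw
    rw [hIio]
    exact Cardinal.lift_lt.mpr hwlam
  have hp : ∃ t, ∀ δ, δ < mu.ord → ∃ α, ∃ hα : α ∈ S.I, δ < α ∧ hh α = t := by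
    by_contra hcon
    push_neg at hcon
    choose δ hδ hno using hcon
    have hsup := supAux hmu (hhcard.trans_le (Cardinal.lift_le.mpr hlammu)) δ hδ
    obtain ⟨α, hα, hgt⟩ := S.I_unbounded (⨆ t, δ t) hsup
    have hbdd : BddAbove (Set.range δ) := ⟨mu.ord, by rintro _ ⟨i, rfl⟩; exact (hδ i).le⟩
    exact hno (hh α) α hα ((le_ciSup hbdd (hh α)).trans_lt hgt) rfl
  obtain ⟨t, ht⟩ := hp
  have hfib : ∀ α, ∀ hα : α ∈ S.I, hh α = t →
      Rf α hα = (t.1 : (Ordinal × Ordinal) → (Ordinal × Ordinal) → Prop) ∧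
        γf α hα = (t.2 : Ordinal) := by
    intro α hα he
    have he' : ((⟨Rf α hα, (hKEY α hα).2.1⟩, ⟨γf α hα, (hKEY α hα).2.2.2.1⟩) :
        ↥S.Rels × ↥(Set.Iio w.ord)) = t := by
      have he0 : hh α = t := he
      simp only [hh] at he0
      rw [dif_pos hα] at he0
      exact he0
    constructor
    · exact congrArg (fun p : ↥S.Rels × ↥(Set.Iio w.ord) =>
        (p.1 : (Ordinal × Ordinal) → (Ordinal × Ordinal) → Prop)) he'
    · exact congrArg (fun p : ↥S.Rels × ↥(Set.Iio w.ord) => (p.2 : Ordinal)) he'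
  -- the branch
  have main : ∀ a, ∀ ha : a ∈ S.I, hh a = t → ∀ c, ∀ hc : c ∈ S.I, hh c = t → a < c →
      (t.1 : (Ordinal × Ordinal) → (Ordinal × Ordinal) → Prop) (a, βf a ha) (c, βf c hc) := by
    intro a ha hea c hc hec hlt
    obtain ⟨η, hη⟩ := Ultrafilter.nonempty_of_mem
      (Filter.inter_mem (hKEY a ha).1 (hKEY c hc).1 : _ ∈ (U : Filter Ordinal))
    have hη1 := (hKEY a ha).2.2.2.2 η hη.1
    have hη2 := (hKEY c hc).2.2.2.2 η hη.2
    obtain ⟨f1, f2⟩ := hfib a ha hea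
    obtain ⟨g1, g2⟩ := hfib c hc hec
    have r1 : (t.1 : (Ordinal × Ordinal) → (Ordinal × Ordinal) → Prop)
        (a, βf a ha) (η, (t.2 : Ordinal)) := by
      rw [← f1, ← f2]
      exact hη1.2.2
    have r2 : (t.1 : (Ordinal × Ordinal) → (Ordinal × Ordinal) → Prop)
        (c, βf c hc) (η, (t.2 : Ordinal)) := by
      rw [← g1, ← g2]
      exact hη2.2.2
    rcases S.rel_treeLike _ t.1.2 (a, βf a ha) (c, βf c hc) (η, (t.2 : Ordinal)) r1 r2 with
      heq | h | h
    · exact absurd (congrArg Prod.fst heq) hlt.ne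
    · exact h
    · exact absurd (S.rel_increasing _ t.1.2 _ _ h) (lt_asymm hlt)
  refine ⟨(t.1 : _),
    {p : Ordinal × Ordinal | ∃ hα : p.1 ∈ S.I, hh p.1 = t ∧ p.2 = βf p.1 hα},
    ⟨t.1.2, ?_, ?_⟩, ?_⟩
  · rintro ⟨a, b⟩ ⟨hα, hht, hb⟩
    refine ⟨hα, ?_⟩
    rw [show ((a, b) : Ordinal × Ordinal).2 = βf a hα from hb]
    exact (hKEY a hα).2.2.1
  · rintro ⟨a, b⟩ ⟨ha, hta, hba⟩ ⟨c, d⟩ ⟨hc, htc, hdc⟩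
    have ea : ((a, b) : Ordinal × Ordinal) = (a, βf a ha) := by
      rw [show b = βf a ha from hba]
    have ec : ((c, d) : Ordinal × Ordinal) = (c, βf c hc) := by
      rw [show d = βf c hc from hdc]
    rw [ea, ec]
    rcases lt_trichotomy a c with h | h | h
    · exact Or.inr (Or.inl (main a ha hta c hc htc h))
    · refine Or.inl ?_
      cases h
      rfl
    · exact Or.inr (Or.inr (main c hc htc a ha hta h))
  · intro δ hδ
    obtain ⟨α, hα, hδα, he⟩ := ht δ hδ
    exact ⟨(α, βf α hα), ⟨hα, he, rfl⟩, hδα⟩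

end Paper
end
end

section
/- Let κ < λ be infinite regular cardinals and let 𝐂 = ⟨C_{α,i} : α < λ limit, i(α) ≤ i < κ⟩ be a matrix satisfying conditions (1)–(5) of the definition of a □^{ind}(λ,κ)-sequence. If there is a club D ⊆ λ such that for every limit point α of D there exists i < κ with D ∩ α = C_{α,i}, then there is a club D ⊆ λ and a single i < κ such that D ∩ α = C_{α,i} for every limit point α of D. (Hence the definition of □^{ind}(λ,κ) is unchanged if its anti-threading clause (6) is weakened to forbid only threads with a fixed index.) -/
noncomputable section

open Cardinal Set

namespace Paper

/-- A matrix satisfying conditions (1)-(5) of the definition of a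
`□^ind(lam, kap)`-sequence: clubs `C α i` in `α` for limit `α < lam` and
`iMin α ≤ i < kap`, increasing in `i`, coherent, and such that any limit
`α < β` is a limit point of some `C β i`. -/
structure IndMatrix (lam kap : Cardinal.{0}) where
  iMin : Ordinal → Ordinal
  C : Ordinal → Ordinal → Set Ordinal
  iMin_lt : ∀ α < lam.ord, Order.IsSuccLimit α → iMin α < kap.ord
  club : ∀ α < lam.ord, Order.IsSuccLimit α → ∀ i, iMin α ≤ i → i < kap.ord → IsClubIn (C α i) α
  mono : ∀ α < lam.ord, Order.IsSuccLimit α → ∀ i j, iMin α ≤ i → i ≤ j → j < kap.ord →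
    C α i ⊆ C α j
  coherent : ∀ α β, α < β → β < lam.ord → Order.IsSuccLimit α → Order.IsSuccLimit β →
    ∀ i, iMin β ≤ i → i < kap.ord → IsLimitPt α (C β i) →
      iMin α ≤ i ∧ C β i ∩ Set.Iio α = C α i
  covers : ∀ α β, α < β → β < lam.ord → Order.IsSuccLimit α → Order.IsSuccLimit β →
    ∃ i, iMin β ≤ i ∧ i < kap.ord ∧ IsLimitPt α (C β i)

/-- In a regular uncountable `lam.ord`, the limit points of a club are unbounded. -/
lemma exists_limitPt_gt {lam : Cardinal.{0}} (hl : lam.IsRegular) (hlam : ℵ₀ < lam)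
    {D : Set Ordinal} (hD : IsClubIn D lam.ord) {γ : Ordinal} (hγ : γ < lam.ord) :
    ∃ α, γ < α ∧ Order.IsSuccLimit α ∧ IsLimitPt α D := by
  have hord := Cardinal.isSuccLimit_ord hl.aleph0_le
  have succlt : ∀ x < lam.ord, x + 1 < lam.ord := by
    intro x hx
    rw [Ordinal.add_one_eq_succ]; exact hord.succ_lt hx
  set f : Ordinal → Ordinal := fun x =>
    if h : x + 1 < lam.ord then (hD.2.1 (x + 1) h).choose else 0 with hf
  have hfspec : ∀ x, x < lam.ord → f x ∈ D ∧ x < f x ∧ f x < lam.ord := by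
    intro x hx
    have h1 := succlt x hx
    have h2 := (hD.2.1 (x + 1) h1).choose_spec
    have hmem : f x ∈ D := by rw [hf]; simp only [dif_pos h1]; exact h2.1
    refine ⟨hmem, ?_, hD.1 hmem⟩
    have : x + 1 ≤ f x := by rw [hf]; simp only [dif_pos h1]; exact h2.2
    exact lt_of_lt_of_le (lt_add_one x) this
  set g : ℕ → Ordinal := fun n => f^[n + 1] γ with hg
  have hgsucc : ∀ n, g (n + 1) = f (g n) := by
    intro n; rw [hg]; simp [Function.iterate_succ_apply']
  have hg0 : g 0 = f γ := by rw [hg]; simp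
  have hgood : ∀ n, g n ∈ D ∧ g n < lam.ord := by
    intro n
    induction n with
    | zero =>
      have := hfspec γ hγ
      exact ⟨by rw [hg0]; exact this.1, by rw [hg0]; exact this.2.2⟩
    | succ n ih =>
      have := hfspec (g n) ih.2
      exact ⟨by rw [hgsucc]; exact this.1, by rw [hgsucc]; exact this.2.2⟩
  have hmono : ∀ n, g n < g (n + 1) := by
    intro n
    rw [hgsucc]
    exact (hfspec (g n) (hgood n).2).2.1
  set α := ⨆ n, g n with hα
  have hbdd : BddAbove (Set.range g) := Ordinal.bddAbove_range g
  have hle : ∀ n, g n ≤ α := fun n => le_ciSup hbdd n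
  have hglt : ∀ n, g n < α := fun n => lt_of_lt_of_le (hmono n) (hle (n + 1))
  have hαlt : α < lam.ord := by
    refine Ordinal.iSup_lt_ord ?_ (fun n => (hgood n).2)
    rw [hl.cof_eq]
    simpa using hlam
  have hlt_iSup : ∀ a, a < α → ∃ n, a < g n := by
    intro a ha
    rwa [hα, Ordinal.lt_iSup_iff] at ha
  have hαlim : Order.IsSuccLimit α := by
    rw [Ordinal.isSuccLimit_iff]
    constructor
    · exact fun h => absurd (hglt 0) (by simp [h])
    · apply Order.isSuccPrelimit_of_succ_lt
      intro a ha
      obtain ⟨n, hn⟩ := hlt_iSup a ha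
      calc Order.succ a ≤ g n := Order.succ_le_of_lt hn
        _ < α := hglt n
  have hsup : sSup (D ∩ Set.Iio α) = α := by
    have hbdd2 : BddAbove (D ∩ Set.Iio α) := ⟨α, fun x hx => le_of_lt hx.2⟩
    apply le_antisymm
    · exact csSup_le ⟨g 0, (hgood 0).1, hglt 0⟩ (fun x hx => le_of_lt hx.2)
    · rw [hα]
      exact ciSup_le fun n => le_csSup hbdd2 ⟨(hgood n).1, hglt n⟩
  have hαD : α ∈ D := hD.2.2 α hαlt hαlim.pos hsup
  exact ⟨α, lt_of_lt_of_le (lt_of_lt_of_le (lt_add_one γ)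
    (by rw [hg0, hf]; simp only [dif_pos (succlt γ hγ)];
        exact (hD.2.1 (γ + 1) (succlt γ hγ)).choose_spec.2)) (hle 0),
    hαlim, hαD, hsup⟩

/-- Proposition 6.3: if a matrix satisfying (1)-(5) of the definition of a
`□^ind(lam, kap)`-sequence admits a club `D ⊆ lam` such that every limit
point `α` of `D` satisfies `D ∩ α = C α i` for some `i < kap`, then there are
such a club `D` and a single fixed `i < kap` working for all limit points of
`D` simultaneously. -/
theorem statement3 (lam kap : Cardinal.{0}) (hk : kap.IsRegular)
    (hl : lam.IsRegular) (hkl : kap < lam) (M : IndMatrix lam kap)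
    (h : ∃ D, IsClubIn D lam.ord ∧ ∀ α, Order.IsSuccLimit α → IsLimitPt α D →
      ∃ i, M.iMin α ≤ i ∧ i < kap.ord ∧ D ∩ Set.Iio α = M.C α i) :
    ∃ D, IsClubIn D lam.ord ∧ ∃ i < kap.ord, ∀ α, Order.IsSuccLimit α → IsLimitPt α D →
      M.iMin α ≤ i ∧ D ∩ Set.Iio α = M.C α i := by
  obtain ⟨D, hD, hwit⟩ := h
  have hlam : ℵ₀ < lam := lt_of_le_of_lt hk.aleph0_le hkl
  -- witnesses propagate downward
  have key : ∀ α β i, Order.IsSuccLimit α → IsLimitPt α D → Order.IsSuccLimit β → IsLimitPt β D →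
      α < β → M.iMin β ≤ i → i < kap.ord → D ∩ Set.Iio β = M.C β i →
      M.iMin α ≤ i ∧ D ∩ Set.Iio α = M.C α i := by
    intro α β i hαlim hαpt hβlim hβpt hαβ hiMin hik hwitβ
    have hβlt : β < lam.ord := hD.1 hβpt.1
    have hinter : D ∩ Set.Iio β ∩ Set.Iio α = D ∩ Set.Iio α := by
      rw [Set.inter_assoc, Set.Iio_inter_Iio, min_eq_right hαβ.le]
    have hαLP : IsLimitPt α (M.C β i) := by
      constructor
      · rw [← hwitβ]; exact ⟨hαpt.1, hαβ⟩
      · rw [← hwitβ, hinter]; exact hαpt.2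
    obtain ⟨h1, h2⟩ := M.coherent α β hαβ hβlt hαlim hβlim i hiMin hik hαLP
    exact ⟨h1, by rw [← h2, ← hwitβ, hinter]⟩
  -- pigeonhole: some i < kap.ord is a witness for unboundedly many limit points of D
  have pigeon : ∃ i < kap.ord, ∀ γ < lam.ord, ∃ β, γ < β ∧ Order.IsSuccLimit β ∧ IsLimitPt β D ∧
      M.iMin β ≤ i ∧ D ∩ Set.Iio β = M.C β i := by
    by_contra hcon
    push_neg at hcon
    choose b hblt hb using hcon
    set F : kap.ord.ToType → Ordinal := fun t =>
      let x := (Ordinal.ToType.mk (o := kap.ord)).symm t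
      b x.1 x.2 with hF
    have hFlt : ∀ t, F t < lam.ord := fun t => hblt _ _
    have hs : (⨆ t, F t) < lam.ord := by
      refine Ordinal.iSup_lt_ord ?_ hFlt
      rw [hl.cof_eq, Cardinal.mk_ord_toType]
      exact hkl
    obtain ⟨β, hβgt, hβlim, hβpt⟩ := exists_limitPt_gt hl hlam hD hs
    obtain ⟨i, h1, h2, h3⟩ := hwit β hβlim hβpt
    have hble : F ((Ordinal.ToType.mk (o := kap.ord)) ⟨i, h2⟩) ≤ ⨆ t, F t :=
      le_ciSup (Ordinal.bddAbove_range F) _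
    have hbeq : F ((Ordinal.ToType.mk (o := kap.ord)) ⟨i, h2⟩) = b i h2 := by
      rw [hF]; simp
    have := hb i h2 β (lt_of_le_of_lt (hbeq ▸ hble) hβgt) hβlim hβpt h1
    exact this h3
  obtain ⟨i, hik, hi⟩ := pigeon
  refine ⟨D, hD, i, hik, ?_⟩
  intro α hαlim hαpt
  have hαlt : α < lam.ord := hD.1 hαpt.1
  obtain ⟨β, hβgt, hβlim, hβpt, hiMin, hwitβ⟩ := hi α hαlt
  exact key α β i hαlim hαpt hβlim hβpt hβgt hiMin hik hwitβ

end Paper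
end
end

section
/- Suppose κ < λ are infinite regular cardinals and □^{ind}(λ,κ) holds. Then there is a subadditive, unbounded function d : [λ]² → κ. -/
noncomputable section

open Cardinal Set

namespace Paper

/-- `□^ind(lam, kap)`: there is a matrix satisfying (1)-(5) with no thread,
i.e. no club `D ⊆ lam` such that every limit point `α` of `D` satisfies
`D ∩ α = C α i` for some `i < kap`. -/
def IndSq (lam kap : Cardinal.{0}) : Prop :=
  ∃ M : IndMatrix lam kap, ¬ ∃ D, IsClubIn D lam.ord ∧
    ∀ α, Order.IsSuccLimit α → IsLimitPt α D →
      ∃ i, M.iMin α ≤ i ∧ i < kap.ord ∧ D ∩ Set.Iio α = M.C α i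

/-- `d` is subadditive on pairs below `lam`. -/
def Subadditive (lam : Cardinal.{0}) (d : Ordinal → Ordinal → Ordinal) : Prop :=
  ∀ α β γ, α < β → β < γ → γ < lam.ord →
    d α γ ≤ max (d α β) (d β γ) ∧ d α β ≤ max (d α γ) (d β γ)

/-- `d` is unbounded: for every unbounded `I ⊆ lam`, the image `d''[I]²` is
unbounded in `kap`. -/
def UnboundedColoring (lam kap : Cardinal.{0}) (d : Ordinal → Ordinal → Ordinal) : Prop :=
  ∀ I : Set Ordinal, I ⊆ Set.Iio lam.ord → (∀ γ < lam.ord, ∃ α ∈ I, γ < α) →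
    ∀ j < kap.ord, ∃ α ∈ I, ∃ β ∈ I, α < β ∧ j ≤ d α β


/-! ### Auxiliary development -/

-- ell

def ell (α : Ordinal) : Ordinal := Ordinal.omega0 * (α / Ordinal.omega0)

lemma ell_le (α : Ordinal) : ell α ≤ α := by
  conv_rhs => rw [← Ordinal.div_add_mod α Ordinal.omega0]
  exact le_self_add

lemma lt_ell_add (α : Ordinal) : α < ell α + Ordinal.omega0 := by
  conv_lhs => rw [← Ordinal.div_add_mod α Ordinal.omega0]
  exact (add_lt_add_iff_left _).mpr (Ordinal.mod_lt α Ordinal.omega0_ne_zero)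

lemma ell_mono {α β : Ordinal} (h : α ≤ β) : ell α ≤ ell β :=
  mul_le_mul_right ((Ordinal.le_div Ordinal.omega0_ne_zero).mpr ((ell_le α).trans h)) _

lemma lt_of_ell_lt {α β : Ordinal} (h : ell α < ell β) : α < β := by
  have hq : α / Ordinal.omega0 < β / Ordinal.omega0 := by
    by_contra hc
    exact absurd (mul_le_mul_right (not_lt.mp hc) _) (not_le.mpr h)
  have h2 : ell α + Ordinal.omega0 ≤ ell β := by
    show Ordinal.omega0 * (α / Ordinal.omega0) + Ordinal.omega0 ≤ _
    rw [← Ordinal.mul_succ]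
    exact mul_le_mul_right (Order.succ_le_of_lt hq) _
  exact lt_of_lt_of_le (lt_ell_add α) (h2.trans (ell_le β))

lemma ell_limit {α : Ordinal} (h : ell α ≠ 0) : Order.IsSuccLimit (ell α) := by
  have : α / Ordinal.omega0 ≠ 0 := by
    intro h0; exact h (by simp [ell, h0])
  exact Ordinal.isSuccLimit_mul_left Ordinal.isSuccLimit_omega0 (pos_iff_ne_zero.mpr this)

-- limit point monotonicity
lemma limitPt_mono {A B : Set Ordinal} {α : Ordinal} (h0 : 0 < α) (hAB : A ⊆ B)
    (h : IsLimitPt α A) : IsLimitPt α B := by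
  have hne : (A ∩ Set.Iio α).Nonempty := by
    by_contra hc
    rw [Set.not_nonempty_iff_eq_empty] at hc
    have h2 := h.2
    rw [hc, csSup_empty] at h2
    exact h0.ne' (by simpa using h2.symm)
  refine ⟨hAB h.1, le_antisymm ?_ ?_⟩
  · exact csSup_le (hne.mono (Set.inter_subset_inter_left _ hAB))
      (fun x hx => hx.2.le)
  · calc α = sSup (A ∩ Set.Iio α) := h.2.symm
      _ ≤ sSup (B ∩ Set.Iio α) := csSup_le_csSup ⟨α, fun x hx => hx.2.le⟩ hne
          (Set.inter_subset_inter_left _ hAB)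


section
variable {lam kap : Cardinal.{0}} (M : IndMatrix lam kap)

/-- Candidate indices for the pair `(α, β)`. -/
def idxSet (α β : Ordinal) : Set Ordinal :=
  {i | M.iMin β ≤ i ∧ i < kap.ord ∧ IsLimitPt α (M.C β i)}

/-- The coloring on pairs of limit ordinals. -/
noncomputable def dd (α β : Ordinal) : Ordinal := sInf (idxSet M α β)

lemma dd_mem {α β : Ordinal} (hα : Order.IsSuccLimit α) (hβ : Order.IsSuccLimit β)
    (hαβ : α < β) (hβl : β < lam.ord) : dd M α β ∈ idxSet M α β :=
  csInf_mem (M.covers α β hαβ hβl hα hβ)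

lemma limitPt_C_mono {α β i j : Ordinal} (hβ : Order.IsSuccLimit β) (hβl : β < lam.ord)
    (hi : M.iMin β ≤ i) (hij : i ≤ j) (hj : j < kap.ord)
    (h : IsLimitPt α (M.C β i)) : IsLimitPt α (M.C β j) := by
  rcases eq_zero_or_pos α with h0 | h0
  · subst h0
    refine ⟨M.mono β hβl hβ i j hi hij hj h.1, ?_⟩
    rw [show Set.Iio (0:Ordinal) = ∅ from Set.eq_empty_iff_forall_notMem.mpr
      (fun x hx => not_lt_of_ge (zero_le (a := x)) hx), Set.inter_empty, csSup_empty]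
    rfl
  · exact limitPt_mono h0 (M.mono β hβl hβ i j hi hij hj) h

lemma limitPt_lt {α β i : Ordinal} (hβ : Order.IsSuccLimit β) (hβl : β < lam.ord)
    (hi : M.iMin β ≤ i) (hik : i < kap.ord)
    (h : IsLimitPt α (M.C β i)) : α < β :=
  (M.club β hβl hβ i hi hik).1 h.1

/-- Subadditivity of `dd` on limit ordinals. -/
lemma dd_subadd {α β γ : Ordinal} (hα : Order.IsSuccLimit α) (hβ : Order.IsSuccLimit β) (hγ : Order.IsSuccLimit γ)
    (hαβ : α < β) (hβγ : β < γ) (hγl : γ < lam.ord) :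
    dd M α γ ≤ max (dd M α β) (dd M β γ) ∧
      dd M α β ≤ max (dd M α γ) (dd M β γ) := by
  have hβl : β < lam.ord := hβγ.trans hγl
  have hαγ : α < γ := hαβ.trans hβγ
  obtain ⟨h1a, h1b, h1c⟩ := dd_mem M hα hβ hαβ hβl
  obtain ⟨h2a, h2b, h2c⟩ := dd_mem M hβ hγ hβγ hγl
  obtain ⟨h3a, h3b, h3c⟩ := dd_mem M hα hγ hαγ hγl
  constructor
  · set i := max (dd M α β) (dd M β γ) with hidef
    have hik : i < kap.ord := max_lt h1b h2b
    have hiγ : M.iMin γ ≤ i := h2a.trans (le_max_right _ _)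
    have hβacc : IsLimitPt β (M.C γ i) :=
      limitPt_C_mono M hγ hγl h2a (le_max_right _ _) hik h2c
    obtain ⟨hiβ, hcoh⟩ := M.coherent β γ hβγ hγl hβ hγ i hiγ hik hβacc
    have hαacc : IsLimitPt α (M.C β i) :=
      limitPt_C_mono M hβ hβl h1a (le_max_left _ _) hik h1c
    have hαacc' : IsLimitPt α (M.C γ i) := by
      rw [← hcoh] at hαacc
      refine ⟨hαacc.1.1, ?_⟩
      have heq : M.C γ i ∩ Set.Iio β ∩ Set.Iio α = M.C γ i ∩ Set.Iio α := by
        rw [Set.inter_assoc, Set.inter_eq_self_of_subset_right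
          (Set.Iio_subset_Iio hαβ.le)]
      rw [← heq]
      exact hαacc.2
    exact csInf_le (OrderBot.bddBelow _) ⟨hiγ, hik, hαacc'⟩
  · set i := max (dd M α γ) (dd M β γ) with hidef
    have hik : i < kap.ord := max_lt h3b h2b
    have hiγ : M.iMin γ ≤ i := h2a.trans (le_max_right _ _)
    have hβacc : IsLimitPt β (M.C γ i) :=
      limitPt_C_mono M hγ hγl h2a (le_max_right _ _) hik h2c
    have hαacc : IsLimitPt α (M.C γ i) :=
      limitPt_C_mono M hγ hγl h3a (le_max_left _ _) hik h3c
    obtain ⟨hiβ, hcoh⟩ := M.coherent β γ hβγ hγl hβ hγ i hiγ hik hβacc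
    have hαacc' : IsLimitPt α (M.C β i) := by
      rw [← hcoh]
      refine ⟨⟨hαacc.1, hαβ⟩, ?_⟩
      have heq : M.C γ i ∩ Set.Iio β ∩ Set.Iio α = M.C γ i ∩ Set.Iio α := by
        rw [Set.inter_assoc, Set.inter_eq_self_of_subset_right
          (Set.Iio_subset_Iio hαβ.le)]
      rw [heq]
      exact hαacc.2
    exact csInf_le (OrderBot.bddBelow _) ⟨hiβ, hik, hαacc'⟩

/-- Unboundedness of `dd` on sets of limit ordinals, from the non-threadability. -/
lemma dd_unbounded
    (hno : ¬ ∃ D, IsClubIn D lam.ord ∧ ∀ α, Order.IsSuccLimit α → IsLimitPt α D →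
      ∃ i, M.iMin α ≤ i ∧ i < kap.ord ∧ D ∩ Set.Iio α = M.C α i)
    (J : Set Ordinal) (hJl : J ⊆ Set.Iio lam.ord) (hJlim : ∀ x ∈ J, Order.IsSuccLimit x)
    (hJub : ∀ γ < lam.ord, ∃ α ∈ J, γ < α) (hlam0 : 0 < lam.ord)
    {j : Ordinal} (hjk : j < kap.ord) :
    ∃ α ∈ J, ∃ β ∈ J, α < β ∧ j ≤ dd M α β := by
  by_contra hcon
  push_neg at hcon
  obtain ⟨α₀, hα₀J, -⟩ := hJub 0 hlam0
  set J₁ : Set Ordinal := {β ∈ J | α₀ < β} with hJ₁def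
  have hJ₁prop : ∀ β ∈ J₁, Order.IsSuccLimit β ∧ β < lam.ord ∧ M.iMin β ≤ j := by
    intro β hβ
    have hβlim := hJlim β hβ.1
    have hβl := hJl hβ.1
    have hmem := dd_mem M (hJlim α₀ hα₀J) hβlim hβ.2 hβl
    exact ⟨hβlim, hβl, hmem.1.trans (hcon α₀ hα₀J β hβ.1 hβ.2).le⟩
  have hacc : ∀ α ∈ J, ∀ β ∈ J₁, α < β → IsLimitPt α (M.C β j) := by
    intro α hα β hβ hαβ
    obtain ⟨hβlim, hβl, hiβ⟩ := hJ₁prop β hβ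
    have hmem := dd_mem M (hJlim α hα) hβlim hαβ hβl
    exact limitPt_C_mono M hβlim hβl hmem.1 (hcon α hα β hβ.1 hαβ).le hjk hmem.2.2
  have hcoh : ∀ β ∈ J₁, ∀ γ ∈ J₁, β < γ → M.C γ j ∩ Set.Iio β = M.C β j := by
    intro β hβ γ hγ hβγ
    obtain ⟨hβlim, hβl, -⟩ := hJ₁prop β hβ
    obtain ⟨hγlim, hγl, hiγ⟩ := hJ₁prop γ hγ
    exact (M.coherent β γ hβγ hγl hβlim hγlim j hiγ hjk
      (hacc β hβ.1 γ hγ hβγ)).2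
  set D : Set Ordinal := ⋃ β ∈ J₁, M.C β j with hDdef
  have hsubβ : ∀ β ∈ J₁, M.C β j ⊆ Set.Iio β := by
    intro β hβ
    obtain ⟨hβlim, hβl, hiβ⟩ := hJ₁prop β hβ
    exact (M.club β hβl hβlim j hiβ hjk).1
  have keyD : ∀ β ∈ J₁, D ∩ Set.Iio β = M.C β j := by
    intro β hβ
    ext x
    constructor
    · rintro ⟨hxD, hxβ⟩
      obtain ⟨γ, hγ, hx⟩ := Set.mem_iUnion₂.mp hxD
      rcases lt_trichotomy γ β with hc | hc | hc
      · have := hcoh γ hγ β hβ hc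
        rw [← this] at hx
        exact hx.1
      · subst hc; exact hx
      · rw [← hcoh β hβ γ hγ hc]
        exact ⟨hx, hxβ⟩
    · intro hx
      exact ⟨Set.mem_iUnion₂.mpr ⟨β, hβ, hx⟩, hsubβ β hβ hx⟩
  have hgetβ : ∀ γ < lam.ord, ∃ β ∈ J₁, γ < β := by
    intro γ hγ
    have hα₀l : α₀ < lam.ord := hJl hα₀J
    obtain ⟨β, hβJ, hβgt⟩ := hJub (max γ α₀) (max_lt hγ hα₀l)
    exact ⟨β, ⟨hβJ, (le_max_right _ _).trans_lt hβgt⟩,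
      (le_max_left _ _).trans_lt hβgt⟩
  have hDsub : D ⊆ Set.Iio lam.ord := by
    intro x hx
    obtain ⟨γ, hγ, hxγ⟩ := Set.mem_iUnion₂.mp hx
    have h1 : x < γ := hsubβ γ hγ hxγ
    have h2 : γ < lam.ord := hJl hγ.1
    exact h1.trans h2
  have hclubD : IsClubIn D lam.ord := by
    refine ⟨hDsub, ?_, ?_⟩
    · intro γ hγ
      obtain ⟨β, hβ, hγβ⟩ := hgetβ γ hγ
      obtain ⟨hβlim, hβl, hiβ⟩ := hJ₁prop β hβ
      obtain ⟨x, hxC, hγx⟩ := (M.club β hβl hβlim j hiβ hjk).2.1 γ hγβ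
      exact ⟨x, Set.mem_iUnion₂.mpr ⟨β, hβ, hxC⟩, hγx⟩
    · intro γ hγ hγ0 hsup
      obtain ⟨β, hβ, hγβ⟩ := hgetβ γ hγ
      obtain ⟨hβlim, hβl, hiβ⟩ := hJ₁prop β hβ
      have heq : D ∩ Set.Iio γ = M.C β j ∩ Set.Iio γ := by
        rw [← keyD β hβ, Set.inter_assoc,
          Set.inter_eq_self_of_subset_right (Set.Iio_subset_Iio hγβ.le)]
      rw [heq] at hsup
      have := (M.club β hβl hβlim j hiβ hjk).2.2 γ hγβ hγ0 hsup
      exact Set.mem_iUnion₂.mpr ⟨β, hβ, this⟩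
  refine hno ⟨D, hclubD, ?_⟩
  intro α hαlim hαpt
  have hαl : α < lam.ord := hDsub hαpt.1
  obtain ⟨β, hβ, hαβ⟩ := hgetβ α hαl
  obtain ⟨hβlim, hβl, hiβ⟩ := hJ₁prop β hβ
  have heq : D ∩ Set.Iio α = M.C β j ∩ Set.Iio α := by
    rw [← keyD β hβ, Set.inter_assoc,
      Set.inter_eq_self_of_subset_right (Set.Iio_subset_Iio hαβ.le)]
  have hαC : IsLimitPt α (M.C β j) := by
    refine ⟨?_, ?_⟩
    · have : α ∈ D ∩ Set.Iio β := ⟨hαpt.1, hαβ⟩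
      rw [keyD β hβ] at this
      exact this
    · rw [← heq]
      exact hαpt.2
  obtain ⟨hiα, hcohα⟩ := M.coherent α β hαβ hβl hαlim hβlim j hiβ hjk hαC
  exact ⟨j, hiα, hjk, by rw [heq, hcohα]⟩

end

/-- Proposition 6.5: if `kap < lam` are infinite regular cardinals and
`□^ind(lam, kap)` holds, then there is a subadditive, unbounded function
`d : [lam]² → kap`. -/
theorem statement4 (lam kap : Cardinal.{0}) (hk : kap.IsRegular)
    (hl : lam.IsRegular) (hkl : kap < lam) (h : IndSq lam kap) :
    ∃ d : Ordinal → Ordinal → Ordinal,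
      (∀ α β, α < β → β < lam.ord → d α β < kap.ord) ∧
      Subadditive lam d ∧ UnboundedColoring lam kap d := by
  obtain ⟨M, hno⟩ := h
  have hk0 : 0 < kap.ord := Cardinal.lt_ord.mpr (by simpa using hk.pos)
  have hωl : Ordinal.omega0 < lam.ord := by
    rw [Cardinal.lt_ord, Ordinal.card_omega0]
    exact lt_of_le_of_lt hk.aleph0_le hkl
  have hlam0 : 0 < lam.ord := lt_trans Ordinal.omega0_pos hωl
  set d : Ordinal → Ordinal → Ordinal := fun α β =>
    if h : ell α ≠ 0 ∧ ell α < ell β then dd M (ell α) (ell β) else 0 with hddef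
  have hval : ∀ α β : Ordinal, ell α ≠ 0 → ell α < ell β → β < lam.ord →
      d α β = dd M (ell α) (ell β) ∧ dd M (ell α) (ell β) ∈ idxSet M (ell α) (ell β) := by
    intro α β ha0 hab hβl
    have hb0 : ell β ≠ 0 := fun h0 => by
      rw [h0] at hab; exact (not_lt_of_ge zero_le hab)
    refine ⟨dif_pos ⟨ha0, hab⟩, dd_mem M (ell_limit ha0) (ell_limit hb0) hab
      ((ell_le β).trans_lt hβl)⟩
  refine ⟨d, ?_, ?_, ?_⟩
  · intro α β hαβ hβl
    by_cases hcond : ell α ≠ 0 ∧ ell α < ell β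
    · obtain ⟨heq, hmem⟩ := hval α β hcond.1 hcond.2 hβl
      rw [heq]
      exact hmem.2.1
    · rw [hddef]
      simp only [dif_neg hcond]
      exact hk0
  · intro α β γ hαβ hβγ hγl
    have hβl : β < lam.ord := hβγ.trans hγl
    have hab : ell α ≤ ell β := ell_mono hαβ.le
    have hbc : ell β ≤ ell γ := ell_mono hβγ.le
    by_cases h1 : ell α = ell β
    · have e1 : d α β = 0 := by
        rw [hddef]; exact dif_neg (fun hc => absurd h1 hc.2.ne)
      have e2 : d α γ = d β γ := by
        rw [hddef]; simp only [h1]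
      rw [e1, e2]
      exact ⟨le_max_right _ _, zero_le⟩
    by_cases h2 : ell β = ell γ
    · have e1 : d β γ = 0 := by
        rw [hddef]; exact dif_neg (fun hc => absurd h2 hc.2.ne)
      have e2 : d α γ = d α β := by
        rw [hddef]; simp only [h2]
      rw [e1, e2]
      exact ⟨le_max_left _ _, le_max_left _ _⟩
    have hab' : ell α < ell β := hab.lt_of_ne h1
    have hbc' : ell β < ell γ := hbc.lt_of_ne h2
    by_cases ha0 : ell α = 0
    · have e1 : d α β = 0 := by
        rw [hddef]; exact dif_neg (fun hc => hc.1 ha0)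
      have e2 : d α γ = 0 := by
        rw [hddef]; exact dif_neg (fun hc => hc.1 ha0)
      rw [e1, e2]
      exact ⟨zero_le, zero_le⟩
    · have hb0 : ell β ≠ 0 := fun h0 => by
        rw [h0] at hab'; exact (not_lt_of_ge zero_le hab')
      obtain ⟨e1, -⟩ := hval α β ha0 hab' hβl
      obtain ⟨e2, -⟩ := hval β γ hb0 hbc' hγl
      obtain ⟨e3, -⟩ := hval α γ ha0 (hab'.trans hbc') hγl
      rw [e1, e2, e3]
      exact dd_subadd M (ell_limit ha0) (ell_limit hb0)
        (ell_limit (fun h0 => by rw [h0] at hbc'; exact not_lt_of_ge zero_le hbc'))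
        hab' hbc' ((ell_le γ).trans_lt hγl)
  · intro I hI hIub j hjk
    set J : Set Ordinal := (ell '' I) \ {0} with hJdef
    have hJl : J ⊆ Set.Iio lam.ord := by
      rintro x ⟨⟨α, hαI, rfl⟩, -⟩
      exact (ell_le α).trans_lt (hI hαI)
    have hJlim : ∀ x ∈ J, Order.IsSuccLimit x := by
      rintro x ⟨⟨α, hαI, rfl⟩, hx0⟩
      exact ell_limit (by simpa using hx0)
    have hJub : ∀ γ < lam.ord, ∃ x ∈ J, γ < x := by
      intro γ hγ
      have hγω : γ + Ordinal.omega0 < lam.ord :=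
        Ordinal.isPrincipal_add_ord hl.aleph0_le hγ hωl
      obtain ⟨α, hαI, hαgt⟩ := hIub (γ + Ordinal.omega0) hγω
      have hγell : γ < ell α := by
        by_contra hc
        push_neg at hc
        exact absurd ((lt_ell_add α).trans_le (add_le_add_left hc _))
          (not_lt.mpr hαgt.le)
      refine ⟨ell α, ⟨⟨α, hαI, rfl⟩, ?_⟩, hγell⟩
      simp only [Set.mem_singleton_iff]
      exact fun h0 => not_lt_of_ge (zero_le (a := γ)) (h0 ▸ hγell)
    obtain ⟨a, haJ, b, hbJ, hab, hjd⟩ :=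
      dd_unbounded M hno J hJl hJlim hJub hlam0 hjk
    obtain ⟨⟨α, hαI, rfl⟩, ha0⟩ := haJ
    obtain ⟨⟨β, hβI, rfl⟩, -⟩ := hbJ
    refine ⟨α, hαI, β, hβI, lt_of_ell_lt hab, ?_⟩
    obtain ⟨e1, -⟩ := hval α β (by simpa using ha0) hab (hI hβI)
    rw [e1]
    exact hjd



end Paper
end
end

section
/- Let κ < λ be infinite regular cardinals. The following are equivalent: (1) □^κ(λ) holds; (2) there is a □(λ)-sequence ⟨C_α : α < λ⟩ and a stationary set S ⊆ S^λ_κ such that for all α ∈ S: otp(C_α) = κ, and for all β with α < β < λ, α is not a limit point of C_β. -/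
noncomputable section

open Cardinal Set

namespace Paper

/-- The order type of a set of ordinals. -/
def otp (C : Set Ordinal) : Ordinal.{1} :=
  Ordinal.type (Subrel ((· < ·) : Ordinal → Ordinal → Prop) (· ∈ C))

/-- A `□(lam)`-sequence: clubs `C α ⊆ α` for limit `α < lam`, coherent, with
no thread. -/
structure SquareSeq (lam : Cardinal.{0}) where
  C : Ordinal → Set Ordinal
  club : ∀ α < lam.ord, Order.IsSuccLimit α → IsClubIn (C α) α
  coherent : ∀ α β, α < β → β < lam.ord → Order.IsSuccLimit α → Order.IsSuccLimit β →
    IsLimitPt α (C β) → C β ∩ Set.Iio α = C α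
  noThread : ¬ ∃ D, IsClubIn D lam.ord ∧
    ∀ α, Order.IsSuccLimit α → IsLimitPt α D → D ∩ Set.Iio α = C α

/-- `S` is stationary in `δ`: it meets every club in `δ`. -/
def StationaryIn (S : Set Ordinal) (δ : Ordinal) : Prop :=
  ∀ D, IsClubIn D δ → (S ∩ D).Nonempty

/-- `□^kap(lam)`: there is a `□(lam)`-sequence with `otp(C_α) < α` for
stationarily many `α ∈ S^lam_kap = {α < lam : cf(α) = kap}`. -/
def SqSup (lam kap : Cardinal.{0}) : Prop :=
  ∃ sq : SquareSeq lam, StationaryIn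
    {α | α < lam.ord ∧ α.cof = kap ∧ otp (sq.C α) < Ordinal.lift.{1} α} lam.ord

/-! ### Auxiliary lemmas -/


universe u

theorem bddAbove_of_subset_Iio {S : Set Ordinal.{u}} {γ : Ordinal.{u}} (hS : S ⊆ Iio γ) :
    BddAbove S := ⟨γ, fun _ hx => (hS hx).le⟩

theorem sSup_eq_iff_unbdd {S : Set Ordinal.{u}} {γ : Ordinal.{u}} (hS : S ⊆ Iio γ) :
    sSup S = γ ↔ ∀ ρ < γ, ∃ s ∈ S, ρ < s := by
  constructor
  · intro h ρ hρ
    by_contra hc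
    push_neg at hc
    exact absurd h (((csSup_le' fun s hs => hc s hs).trans_lt hρ).ne)
  · intro h
    refine le_antisymm (csSup_le' fun s hs => (hS hs).le) (le_of_forall_lt fun ρ hρ => ?_)
    obtain ⟨s, hs, h1⟩ := h ρ hρ
    exact h1.trans_le (le_csSup (bddAbove_of_subset_Iio hS) hs)

theorem inter_Iio_subset {C : Set Ordinal.{u}} {γ : Ordinal.{u}} : C ∩ Iio γ ⊆ Iio γ :=
  inter_subset_right

theorem isLimitPt_iff {γ : Ordinal} {C : Set Ordinal} :
    IsLimitPt γ C ↔ γ ∈ C ∧ ∀ ρ < γ, ∃ s ∈ C, s < γ ∧ ρ < s := by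
  unfold IsLimitPt
  rw [sSup_eq_iff_unbdd inter_Iio_subset]
  constructor
  · rintro ⟨h1, h2⟩
    exact ⟨h1, fun ρ hρ => by obtain ⟨s, ⟨hs1, hs2⟩, hs3⟩ := h2 ρ hρ; exact ⟨s, hs1, hs2, hs3⟩⟩
  · rintro ⟨h1, h2⟩
    exact ⟨h1, fun ρ hρ => by obtain ⟨s, hs1, hs2, hs3⟩ := h2 ρ hρ; exact ⟨s, ⟨hs1, hs2⟩, hs3⟩⟩

theorem IsLimitPt.mono {γ : Ordinal} {C D : Set Ordinal} (h : IsLimitPt γ C) (hCD : C ⊆ D) :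
    IsLimitPt γ D := by
  rw [isLimitPt_iff] at h ⊢
  exact ⟨hCD h.1, fun ρ hρ => by
    obtain ⟨s, hs1, hs2, hs3⟩ := h.2 ρ hρ; exact ⟨s, hCD hs1, hs2, hs3⟩⟩

theorem IsLimitPt.isLimit {γ : Ordinal} {C : Set Ordinal} (h : IsLimitPt γ C) (h0 : 0 < γ) :
    Order.IsSuccLimit γ := by
  rw [isLimitPt_iff] at h
  refine Ordinal.isSuccLimit_iff.2 ⟨h0.ne', Order.isSuccPrelimit_of_succ_lt fun a ha => ?_⟩
  obtain ⟨s, _, hs2, hs3⟩ := h.2 a ha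
  exact (Order.succ_le_of_lt hs3).trans_lt hs2

/-- Transfer of limit points along a coherence equation. -/
theorem isLimitPt_congr {C D : Set Ordinal} {γ' γ : Ordinal} (h : C ∩ Iio γ' = D)
    (hγ : γ < γ') : IsLimitPt γ D ↔ IsLimitPt γ C := by
  subst h
  unfold IsLimitPt
  have h2 : C ∩ Iio γ' ∩ Iio γ = C ∩ Iio γ := by
    ext x; simp only [mem_inter_iff, mem_Iio, and_assoc]
    exact ⟨fun ⟨a, _, c⟩ => ⟨a, c⟩, fun ⟨a, c⟩ => ⟨a, c.trans hγ, c⟩⟩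
  rw [h2]
  simp only [mem_inter_iff, mem_Iio]
  tauto

/-! ### Order type API -/

/-- The index of `δ` inside a set of ordinals `C`. -/
def oC (C : Set Ordinal) (δ : Ordinal) : Ordinal.{1} :=
  otp (C ∩ Iio δ)

theorem otp_mono {A B : Set Ordinal} (h : A ⊆ B) : otp A ≤ otp B := by
  refine RelEmbedding.ordinal_type_le ⟨⟨fun x => ⟨x.1, h x.2⟩, ?_⟩, ?_⟩
  · intro x y hxy; simpa [Subtype.ext_iff] using hxy
  · intro x y; exact Iff.rfl

theorem oC_eq_typein {C : Set Ordinal} {δ : Ordinal} (h : δ ∈ C) :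
    oC C δ = Ordinal.typein (Subrel ((·<·) : Ordinal → Ordinal → Prop) (· ∈ C)) ⟨δ, h⟩ := by
  rw [oC, otp, ← Ordinal.type_subrel]
  exact Ordinal.type_eq.2 ⟨⟨⟨fun x => ⟨⟨x.1, x.2.1⟩, x.2.2⟩, fun x => ⟨x.1.1, x.1.2, x.2⟩,
    fun x => rfl, fun x => rfl⟩, Iff.rfl⟩⟩

theorem oC_lt_otp {C : Set Ordinal} {δ : Ordinal} (h : δ ∈ C) : oC C δ < otp C := by
  rw [oC_eq_typein h]; exact Ordinal.typein_lt_type _ _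

theorem oC_lt_oC_iff {C : Set Ordinal} {δ δ' : Ordinal} (h : δ ∈ C) (h' : δ' ∈ C) :
    oC C δ < oC C δ' ↔ δ < δ' := by
  rw [oC_eq_typein h, oC_eq_typein h', Ordinal.typein_lt_typein]
  exact Iff.rfl

theorem oC_le_oC_iff {C : Set Ordinal} {δ δ' : Ordinal} (h : δ ∈ C) (h' : δ' ∈ C) :
    oC C δ ≤ oC C δ' ↔ δ ≤ δ' := by
  rw [← not_lt, ← not_lt, not_iff_not]
  exact oC_lt_oC_iff h' h

theorem oC_inj {C : Set Ordinal} {δ δ' : Ordinal} (h : δ ∈ C) (h' : δ' ∈ C)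
    (he : oC C δ = oC C δ') : δ = δ' := by
  have h1 := (oC_le_oC_iff h h').1 he.le
  have h2 := (oC_le_oC_iff h' h).1 he.ge
  exact le_antisymm h1 h2

theorem oC_surj {C : Set Ordinal} {ι : Ordinal.{1}} (h : ι < otp C) :
    ∃ δ, ∃ hδ : δ ∈ C, oC C δ = ι := by
  obtain ⟨⟨δ, hδ⟩, h2⟩ := Ordinal.typein_surj (Subrel ((·<·) : Ordinal → Ordinal → Prop) (· ∈ C)) h
  exact ⟨δ, hδ, by rw [oC_eq_typein hδ, h2]⟩

/-- `oC` only depends on the part of `C` below `δ`. -/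
theorem oC_congr {C : Set Ordinal} {γ δ : Ordinal} (h : δ ≤ γ) :
    oC C δ = oC (C ∩ Iio γ) δ := by
  have hset : C ∩ Iio γ ∩ Iio δ = C ∩ Iio δ := by
    ext x
    simp only [mem_inter_iff, mem_Iio, and_assoc]
    exact ⟨fun ⟨a, _, c⟩ => ⟨a, c⟩, fun ⟨a, c⟩ => ⟨a, c.trans_le h, c⟩⟩
  unfold oC
  rw [hset]

theorem otp_Iio (o : Ordinal.{0}) : otp (Iio o) = Ordinal.lift.{1,0} o := by
  have f : (Subrel ((·<·) : Ordinal → Ordinal → Prop) (· ∈ Iio o)) ≃r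
      ((·<·) : o.ToType → o.ToType → Prop) := (@Ordinal.ToType.mk o).toRelIsoLT
  have h2 := @RelIso.ordinal_lift_type_eq.{1,0} _ _ _ _ inferInstance isWellOrder_lt f
  rw [Ordinal.type_toType] at h2
  rw [otp]
  simpa using h2

theorem otp_eq_of_iso {A B : Set Ordinal} (f : ↥A → ↥B) (hmono : ∀ x y : ↥A, x.1 < y.1 → (f x).1 < (f y).1)
    (hsurj : Function.Surjective f) : otp A = otp B := by
  refine Ordinal.type_eq.2
    ⟨RelIso.ofSurjective (RelEmbedding.ofMonotone f fun a b hab => hmono a b hab) ?_⟩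
  intro b
  obtain ⟨a, ha⟩ := hsurj b
  exact ⟨a, ha⟩

/-! ### Club basics and Fodor's lemma -/

theorem isClubIn_Iio (δ : Ordinal) : IsClubIn (Iio δ) δ :=
  ⟨fun _ h => h, fun γ hγ => ⟨γ, hγ, le_refl _⟩, fun γ hγ _ _ => hγ⟩

/-- Unboundedness part of a club, as a choice function. -/
def nxt {D : Set Ordinal} {δ : Ordinal} (hD : IsClubIn D δ) (γ : Ordinal) : Ordinal :=
  if h : γ < δ then (hD.2.1 γ h).choose else 0

theorem nxt_spec {D : Set Ordinal} {δ : Ordinal} (hD : IsClubIn D δ) {γ : Ordinal}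
    (h : γ < δ) : nxt hD γ ∈ D ∧ γ ≤ nxt hD γ := by
  rw [nxt, dif_pos h]
  obtain ⟨h1, h2⟩ := (hD.2.1 γ h).choose_spec
  exact ⟨h1, h2⟩

theorem IsClubIn.inter_Ioi {D : Set Ordinal} {δ ρ : Ordinal} (hD : IsClubIn D δ)
    (hδ : Order.IsSuccLimit δ) (hρ : ρ < δ) : IsClubIn (D ∩ Ioi ρ) δ := by
  refine ⟨fun x hx => hD.1 hx.1, ?_, ?_⟩
  · intro γ hγ
    have hm : max γ (ρ + 1) < δ := by
      rw [Ordinal.add_one_eq_succ]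
      exact max_lt hγ (hδ.succ_lt hρ)
    obtain ⟨β, hβ1, hβ2⟩ := hD.2.1 _ hm
    refine ⟨β, ⟨hβ1, ?_⟩, le_trans (le_max_left _ _) hβ2⟩
    have : ρ + 1 ≤ β := le_trans (le_max_right _ _) hβ2
    exact lt_of_lt_of_le (lt_add_one ρ) this
  · intro γ hγ h0 hsup
    have hun := (sSup_eq_iff_unbdd (inter_Iio_subset (C := D ∩ Ioi ρ))).1 hsup
    obtain ⟨s, hs, _⟩ := hun 0 h0
    have hργ : ρ < γ := hs.1.2.trans hs.2
    have h2 : sSup (D ∩ Iio γ) = γ := by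
      rw [sSup_eq_iff_unbdd inter_Iio_subset]
      intro ρ' hρ'
      obtain ⟨s', hs', h3⟩ := hun ρ' hρ'
      exact ⟨s', ⟨hs'.1.1, hs'.2⟩, h3⟩
    exact ⟨hD.2.2 γ hγ h0 h2, hργ⟩

theorem club_omega_lim {lam : Cardinal.{0}} (hl : lam.IsRegular) (hω : ℵ₀ < lam)
    {D : Set Ordinal} (hD : IsClubIn D lam.ord) {ρ : Ordinal} (hρ : ρ < lam.ord) :
    ∃ α, Order.IsSuccLimit α ∧ IsLimitPt α D ∧ ρ < α ∧ α < lam.ord := by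
  have hord : Order.IsSuccLimit lam.ord := Cardinal.isSuccLimit_ord hl.aleph0_le
  have hcof : lam.ord.cof = lam := hl.cof_eq
  set a : ℕ → Ordinal := fun n => Nat.rec (nxt hD (ρ + 1)) (fun _ x => nxt hD (x + 1)) n with ha
  have hsucc : ∀ n, a (n + 1) = nxt hD (a n + 1) := fun n => rfl
  have key : ∀ n, a n ∈ D ∧ ρ < a n := by
    intro n
    induction n with
    | zero =>
      have h1 := nxt_spec hD (hord.succ_lt hρ)
      exact ⟨h1.1, lt_of_lt_of_le (lt_add_one ρ) h1.2⟩
    | succ n ih =>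
      have h2 := nxt_spec hD (hord.succ_lt (hD.1 ih.1))
      rw [hsucc]
      exact ⟨h2.1, lt_of_le_of_lt ih.2.le (lt_of_lt_of_le (lt_add_one _) h2.2)⟩
  have hmono : ∀ n, a n < a (n + 1) := by
    intro n
    have h2 := nxt_spec hD (hord.succ_lt (hD.1 (key n).1))
    rw [hsucc]
    exact lt_of_lt_of_le (lt_add_one _) h2.2
  have hbdd : BddAbove (range a) := Ordinal.bddAbove_range a
  set α := ⨆ n, a n with hα
  have haα : ∀ n, a n < α := fun n => lt_of_lt_of_le (hmono n) (le_ciSup hbdd (n + 1))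
  have hαlam : α < lam.ord := by
    refine Ordinal.iSup_lt_of_lt_cof ?_ fun n => hD.1 (key n).1
    rwa [hcof, Cardinal.mk_nat]
  have hsup : sSup (D ∩ Iio α) = α := by
    rw [sSup_eq_iff_unbdd inter_Iio_subset]
    intro ρ' hρ'
    obtain ⟨n, hn⟩ := (lt_ciSup_iff hbdd).1 hρ'
    exact ⟨a n, ⟨(key n).1, haα n⟩, hn⟩
  have h0 : 0 < α := lt_of_le_of_lt (zero_le : 0 ≤ a 0) (haα 0)
  have hαD : α ∈ D := hD.2.2 α hαlam h0 hsup
  have hpt : IsLimitPt α D := ⟨hαD, hsup⟩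
  exact ⟨α, hpt.isLimit h0, hpt, lt_of_lt_of_le (key 0).2 (haα 0).le, hαlam⟩

/-- The set of limit points (which are limit ordinals) of `D`. -/
def accLim (D : Set Ordinal) : Set Ordinal :=
  {γ | Order.IsSuccLimit γ ∧ IsLimitPt γ D}

theorem accLim_club {lam : Cardinal.{0}} (hl : lam.IsRegular) (hω : ℵ₀ < lam)
    {D : Set Ordinal} (hD : IsClubIn D lam.ord) : IsClubIn (accLim D) lam.ord := by
  refine ⟨fun x hx => hD.1 hx.2.1, ?_, ?_⟩
  · intro γ hγ
    obtain ⟨α, h1, h2, h3, h4⟩ := club_omega_lim hl hω hD hγ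
    exact ⟨α, ⟨h1, h2⟩, h3.le⟩
  · intro γ hγ h0 hsup
    have hun := (sSup_eq_iff_unbdd (inter_Iio_subset (C := accLim D))).1 hsup
    have hsupD : sSup (D ∩ Iio γ) = γ := by
      rw [sSup_eq_iff_unbdd inter_Iio_subset]
      intro ρ hρ
      obtain ⟨s, hs, h1⟩ := hun ρ hρ
      exact ⟨s, ⟨hs.1.2.1, hs.2⟩, h1⟩
    have hpt : IsLimitPt γ D := ⟨hD.2.2 γ hγ h0 hsupD, hsupD⟩
    exact ⟨hpt.isLimit h0, hpt⟩

theorem fodor {lam : Cardinal.{0}} (hl : lam.IsRegular) (hω : ℵ₀ < lam)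
    {S : Set Ordinal} (hS : StationaryIn S lam.ord) (f : Ordinal → Ordinal)
    (hf : ∀ α ∈ S, f α < α) :
    ∃ ν, StationaryIn {α | α ∈ S ∧ f α = ν} lam.ord := by
  have hord : Order.IsSuccLimit lam.ord := Cardinal.isSuccLimit_ord hl.aleph0_le
  have hcof : lam.ord.cof = lam := hl.cof_eq
  by_contra hc
  push_neg at hc
  have h : ∀ ν, ∃ D, IsClubIn D lam.ord ∧ {α | α ∈ S ∧ f α = ν} ∩ D = ∅ := by
    intro ν
    have := hc ν
    rw [StationaryIn] at this
    push_neg at this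
    obtain ⟨D, hD1, hD2⟩ := this
    exact ⟨D, hD1, hD2⟩
  set Dc : Ordinal → Set Ordinal := fun ν => (h ν).choose with hDcdef
  have hDc : ∀ ν, IsClubIn (Dc ν) lam.ord := fun ν => (h ν).choose_spec.1
  have hdisj : ∀ ν, {α | α ∈ S ∧ f α = ν} ∩ Dc ν = ∅ := fun ν => (h ν).choose_spec.2
  -- the "next element simultaneously" function
  set g : Ordinal → Ordinal := fun γ =>
    if hγ : γ < lam.ord then
      (max γ (⨆ i : γ.ToType, nxt (hDc ((@Ordinal.ToType.mk γ).symm i).1) γ)) + 1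
    else 0 with hgdef
  have hg : ∀ γ, γ < lam.ord → g γ < lam.ord ∧ γ < g γ ∧
      ∀ ν < γ, ∃ d ∈ Dc ν, γ ≤ d ∧ d < g γ := by
    intro γ hγ
    have hsup : (⨆ i : γ.ToType, nxt (hDc ((@Ordinal.ToType.mk γ).symm i).1) γ) < lam.ord := by
      refine Ordinal.iSup_lt_of_lt_cof ?_ fun i => ?_
      · rw [hcof, Cardinal.mk_toType]
        exact (Cardinal.lt_ord).1 hγ
      · exact (hDc _).1 (nxt_spec (hDc _) hγ).1
    have hmax : max γ (⨆ i : γ.ToType, nxt (hDc ((@Ordinal.ToType.mk γ).symm i).1) γ)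
        < lam.ord := max_lt hγ hsup
    have hgval : g γ = (max γ (⨆ i : γ.ToType, nxt (hDc ((@Ordinal.ToType.mk γ).symm i).1) γ))
        + 1 := dif_pos hγ
    refine ⟨?_, ?_, ?_⟩
    · rw [hgval, Ordinal.add_one_eq_succ]
      exact hord.succ_lt hmax
    · rw [hgval]
      exact lt_of_le_of_lt (le_max_left _ _) (lt_add_one _)
    · intro ν hν
      set i := (@Ordinal.ToType.mk γ) ⟨ν, hν⟩ with hidef
      refine ⟨nxt (hDc ν) γ, (nxt_spec (hDc ν) hγ).1, (nxt_spec (hDc ν) hγ).2, ?_⟩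
      have h1 : nxt (hDc ν) γ ≤ ⨆ i : γ.ToType,
          nxt (hDc ((@Ordinal.ToType.mk γ).symm i).1) γ := by
        have h2 := le_ciSup (Ordinal.bddAbove_range
          (fun i : γ.ToType => nxt (hDc ((@Ordinal.ToType.mk γ).symm i).1) γ)) i
        simpa [hidef] using h2
      rw [hgval]
      exact lt_of_le_of_lt (h1.trans (le_max_right _ _)) (lt_add_one _)
  -- the diagonal intersection
  set Δ : Set Ordinal := {β | β < lam.ord ∧ ∀ ν < β, β ∈ Dc ν} with hΔdef
  have hΔ : IsClubIn Δ lam.ord := by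
    refine ⟨fun x hx => hx.1, ?_, ?_⟩
    · -- unbounded
      intro γ₀ hγ₀
      set b : ℕ → Ordinal := fun n => Nat.rec γ₀ (fun _ x => g x) n with hbdef
      have hbsucc : ∀ n, b (n + 1) = g (b n) := fun n => rfl
      have hblt : ∀ n, b n < lam.ord := by
        intro n
        induction n with
        | zero => exact hγ₀
        | succ n ih => rw [hbsucc]; exact (hg _ ih).1
      have hbmono : ∀ n, b n < b (n + 1) := fun n => by
        rw [hbsucc]; exact (hg _ (hblt n)).2.1
      have hbmono' : ∀ m n, m ≤ n → b m ≤ b n := by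
        intro m n hmn
        induction n with
        | zero => simp_all
        | succ n ih =>
          rcases Nat.lt_or_ge m (n+1) with h1 | h1
          · exact (ih (Nat.lt_succ_iff.1 h1)).trans (hbmono n).le
          · have : m = n + 1 := le_antisymm hmn h1
            rw [this]
      have hbdd : BddAbove (range b) := Ordinal.bddAbove_range b
      set β := ⨆ n, b n with hβdef
      have hbβ : ∀ n, b n < β := fun n => lt_of_lt_of_le (hbmono n) (le_ciSup hbdd (n + 1))
      have hβlam : β < lam.ord := by
        refine Ordinal.iSup_lt_of_lt_cof ?_ fun n => hblt n
        rwa [hcof, Cardinal.mk_nat]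
      have hβΔ : β ∈ Δ := by
        refine ⟨hβlam, fun ν hν => ?_⟩
        obtain ⟨n, hn⟩ := (lt_ciSup_iff hbdd).1 hν
        have hsupν : sSup (Dc ν ∩ Iio β) = β := by
          rw [sSup_eq_iff_unbdd inter_Iio_subset]
          intro ρ hρ
          obtain ⟨m, hm⟩ := (lt_ciSup_iff hbdd).1 hρ
          set k := max m n with hk
          obtain ⟨d, hd1, hd2, hd3⟩ := (hg (b k) (hblt k)).2.2 ν
            (lt_of_lt_of_le hn (hbmono' n k (le_max_right m n)))
          refine ⟨d, ⟨hd1, ?_⟩, ?_⟩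
          · exact lt_of_lt_of_le (hd3.trans_le (hbsucc k ▸ le_refl _)) ((hbβ (k+1)).le)
          · exact lt_of_lt_of_le (hm.trans_le (hbmono' m k (le_max_left m n))) hd2
        have h0 : 0 < β := lt_of_le_of_lt (zero_le : 0 ≤ b 0) (hbβ 0)
        exact (hDc ν).2.2 β hβlam h0 hsupν
      exact ⟨β, hβΔ, (hbβ 0).le⟩
    · -- closed
      intro γ hγ h0 hsup
      have hun := (sSup_eq_iff_unbdd (inter_Iio_subset (C := Δ))).1 hsup
      refine ⟨hγ, fun ν hν => ?_⟩
      have hsupν : sSup (Dc ν ∩ Iio γ) = γ := by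
        rw [sSup_eq_iff_unbdd inter_Iio_subset]
        intro ρ hρ
        obtain ⟨β', hβ', h1⟩ := hun (max ρ ν) (max_lt hρ hν)
        refine ⟨β', ⟨hβ'.1.2 ν (lt_of_le_of_lt (le_max_right ρ ν) h1), hβ'.2⟩,
          lt_of_le_of_lt (le_max_left ρ ν) h1⟩
      exact (hDc ν).2.2 γ hγ h0 hsupν
  obtain ⟨α, hαS, hαΔ⟩ := hS Δ hΔ
  have hν := hf α hαS
  have : α ∈ {a | a ∈ S ∧ f a = f α} ∩ Dc (f α) := ⟨⟨hαS, rfl⟩, hαΔ.2 (f α) hν⟩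
  rw [hdisj (f α)] at this
  exact this

/-! ### A club of order type `kap.ord` inside a given club -/

theorem exists_otp_club {kap : Cardinal.{0}} (hk : kap.IsRegular) {αs : Ordinal}
    (hcof : αs.cof = kap) {Cs : Set Ordinal} (hCs : IsClubIn Cs αs) :
    ∃ X : Set Ordinal, X ⊆ Cs ∧ IsClubIn X αs ∧ otp X = Ordinal.lift.{1,0} kap.ord := by
  have hαs : Order.IsSuccLimit αs := Ordinal.aleph0_le_cof.1 (hcof ▸ hk.aleph0_le)
  have hκord : Order.IsSuccLimit kap.ord := Cardinal.isSuccLimit_ord hk.aleph0_le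
  obtain ⟨F, hF⟩ := Ordinal.exists_fundamental_sequence αs
  have hco : αs.cof.ord = kap.ord := by rw [hcof]
  set F' : Ordinal → Ordinal := fun j => if h : j < kap.ord then F j (by rw [hco]; exact h) else 0
    with hF'def
  have hF'lt : ∀ j < kap.ord, F' j < αs := by
    intro j hj
    have hj' : j < αs.cof.ord := by rw [hco]; exact hj
    have h2 : F j hj' < Ordinal.blsub _ F := Ordinal.lt_blsub F j hj'
    rw [hF.2.2] at h2
    rw [hF'def]
    simp only [dif_pos hj]
    exact h2
  have hF'cof : ∀ ρ < αs, ∃ j < kap.ord, ρ ≤ F' j := by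
    intro ρ hρ
    rw [← hF.2.2] at hρ
    obtain ⟨i, hi, h1⟩ := Ordinal.lt_blsub_iff.1 hρ
    refine ⟨i, by rw [← hco]; exact hi, ?_⟩
    rw [hF'def]
    simp only [dif_pos (show i < kap.ord by rw [← hco]; exact hi)]
    exact h1
  set x : Ordinal → Ordinal := fun j => Ordinal.limitRecOn j (nxt hCs 0)
    (fun i xi => nxt hCs (max (F' i + 1) (xi + 1))) (fun j _ ih => Ordinal.bsup j ih) with hxdef
  have hx0 : x 0 = nxt hCs 0 := Ordinal.limitRecOn_zero _ _ _
  have hxsucc : ∀ i, x (Order.succ i) = nxt hCs (max (F' i + 1) (x i + 1)) :=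
    fun i => Ordinal.limitRecOn_succ _ _ _ _
  have hxlim : ∀ j, Order.IsSuccLimit j → x j = Ordinal.bsup j (fun i _ => x i) :=
    fun j hj => Ordinal.limitRecOn_limit _ _ _ _ hj
  have key : ∀ j, j < kap.ord → x j ∈ Cs ∧ ∀ i < j, x i < x j := by
    intro j
    induction j using Ordinal.induction with
    | h j IH =>
      intro hj
      rcases Ordinal.zero_or_succ_or_isSuccLimit j with h0 | ⟨i, hi⟩ | hlim
      · subst h0
        rw [hx0]
        exact ⟨(nxt_spec hCs hαs.pos).1, fun i h => absurd h (not_lt_of_ge zero_le)⟩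
      · subst hi
        have hilt : i < Order.succ i := Order.lt_succ i
        have hiκ : i < kap.ord := hilt.trans hj
        obtain ⟨hxi, hmono⟩ := IH i hilt hiκ
        have hxiαs : x i < αs := hCs.1 hxi
        have hρ : max (F' i + 1) (x i + 1) < αs := by
          rw [Ordinal.add_one_eq_succ, Ordinal.add_one_eq_succ]
          exact max_lt (hαs.succ_lt (hF'lt i hiκ)) (hαs.succ_lt hxiαs)
        obtain ⟨h1, h2⟩ := nxt_spec hCs hρ
        rw [hxsucc i]
        refine ⟨h1, fun i' hi' => ?_⟩
        have hxi' : x i' ≤ x i := by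
          rcases (Order.lt_succ_iff.1 hi').lt_or_eq with h | h
          · exact (hmono i' h).le
          · rw [h]
        calc x i' ≤ x i := hxi'
          _ < x i + 1 := lt_add_one _
          _ ≤ max (F' i + 1) (x i + 1) := le_max_right _ _
          _ ≤ nxt hCs _ := h2
      · -- limit case
        have hmono : ∀ i < j, x i < x j := by
          intro i hi
          have hsi : Order.succ i < j := hlim.succ_lt hi
          have h1 : x i < x (Order.succ i) := by
            have hiκ : i < kap.ord := hi.trans hj
            obtain ⟨hxi, _⟩ := IH i hi hiκ
            have hxiαs : x i < αs := hCs.1 hxi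
            have hρ : max (F' i + 1) (x i + 1) < αs := by
              rw [Ordinal.add_one_eq_succ, Ordinal.add_one_eq_succ]
              exact max_lt (hαs.succ_lt (hF'lt i hiκ)) (hαs.succ_lt hxiαs)
            obtain ⟨_, h2⟩ := nxt_spec hCs hρ
            rw [hxsucc i]
            calc x i < x i + 1 := lt_add_one _
              _ ≤ max (F' i + 1) (x i + 1) := le_max_right _ _
              _ ≤ nxt hCs _ := h2
          have h2 : x (Order.succ i) ≤ x j := by
            rw [hxlim j hlim]
            exact Ordinal.le_bsup (fun i _ => x i) (Order.succ i) hsi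
          exact h1.trans_le h2
        have hxjαs : x j < αs := by
          rw [hxlim j hlim]
          refine Ordinal.bsup_lt_ord ?_ fun i hi => hCs.1 (IH i hi (hi.trans hj)).1
          rw [hcof]
          exact Cardinal.lt_ord.1 hj
        have h0 : 0 < x j := (zero_le : 0 ≤ (x 0)).trans_lt (hmono 0 hlim.pos)
        have hsup : sSup (Cs ∩ Iio (x j)) = x j := by
          rw [sSup_eq_iff_unbdd inter_Iio_subset]
          intro ρ hρ
          rw [hxlim j hlim] at hρ
          obtain ⟨i, hi, h1⟩ := (Ordinal.lt_bsup (fun i _ => x i)).1 hρ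
          exact ⟨x i, ⟨(IH i hi (hi.trans hj)).1, hmono i hi⟩, h1⟩
        exact ⟨hCs.2.2 _ hxjαs h0 hsup, hmono⟩
  have hmono : ∀ i j, i < j → j < kap.ord → x i < x j := fun i j hij hj => (key j hj).2 i hij
  have hunbdd : ∀ ρ < αs, ∃ j < kap.ord, ρ ≤ x j := by
    intro ρ hρ
    obtain ⟨i, hiκ, h1⟩ := hF'cof ρ hρ
    refine ⟨Order.succ i, hκord.succ_lt hiκ, ?_⟩
    have hxiαs : x i < αs := hCs.1 (key i hiκ).1
    have hρ2 : max (F' i + 1) (x i + 1) < αs := by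
      rw [Ordinal.add_one_eq_succ, Ordinal.add_one_eq_succ]
      exact max_lt (hαs.succ_lt (hF'lt i hiκ)) (hαs.succ_lt hxiαs)
    obtain ⟨_, h2⟩ := nxt_spec hCs hρ2
    rw [hxsucc i]
    calc ρ ≤ F' i := h1
      _ ≤ F' i + 1 := (lt_add_one _).le
      _ ≤ max (F' i + 1) (x i + 1) := le_max_left _ _
      _ ≤ nxt hCs _ := h2
  set X : Set Ordinal := x '' (Iio kap.ord) with hXdef
  have hXsub : X ⊆ Cs := by
    rintro y ⟨j, hj, rfl⟩
    exact (key j hj).1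
  have hXclub : IsClubIn X αs := by
    refine ⟨fun y hy => hCs.1 (hXsub hy), ?_, ?_⟩
    · intro γ hγ
      obtain ⟨j, hj, h1⟩ := hunbdd γ hγ
      exact ⟨x j, ⟨j, hj, rfl⟩, h1⟩
    · intro γ hγ h0 hsup
      have hun := (sSup_eq_iff_unbdd (inter_Iio_subset (C := X))).1 hsup
      have hne : {j | j < kap.ord ∧ γ ≤ x j}.Nonempty := by
        obtain ⟨j, hj, h1⟩ := hunbdd γ hγ
        exact ⟨j, hj, h1⟩
      set js := Ordinal.lt_wf.min _ hne with hjsdef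
      obtain ⟨hjsκ, hjsγ⟩ : js < kap.ord ∧ γ ≤ x js := Ordinal.lt_wf.min_mem _ hne
      have hlow : ∀ j < js, j < kap.ord → x j < γ := by
        intro j hj hjκ
        by_contra hcon
        push_neg at hcon
        exact Ordinal.lt_wf.not_lt_min _
          (show j ∈ {j | j < kap.ord ∧ γ ≤ x j} from ⟨hjκ, hcon⟩) hj
      rcases Ordinal.zero_or_succ_or_isSuccLimit js with h0' | ⟨i, hi⟩ | hlim
      · exfalso
        obtain ⟨s, hs, _⟩ := hun 0 h0
        obtain ⟨j, hj, rfl⟩ := hs.1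
        have : j < js := by
          by_contra hcon
          push_neg at hcon
          have : x js ≤ x j := by
            rcases hcon.lt_or_eq with h | h
            · exact (hmono js j h hj).le
            · rw [h]
          exact absurd (hjsγ.trans this) (not_le.2 hs.2)
        rw [h0'] at this
        exact absurd this (not_lt_of_ge zero_le)
      · exfalso
        have hiκ : i < kap.ord := (Order.lt_succ i).trans (hi ▸ hjsκ)
        have hxi : x i < γ := hlow i (hi ▸ Order.lt_succ i) hiκ
        have : sSup (X ∩ Iio γ) ≤ x i := by
          refine csSup_le' ?_
          rintro y ⟨⟨j, hj, rfl⟩, hy2⟩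
          have hjjs : j < js := by
            by_contra hcon
            push_neg at hcon
            have : x js ≤ x j := by
              rcases hcon.lt_or_eq with h | h
              · exact (hmono js j h hj).le
              · rw [h]
            exact absurd (hjsγ.trans this) (not_le.2 hy2)
          have : j ≤ i := by
            rw [← hi] at hjjs
            exact Order.lt_succ_iff.1 hjjs
          rcases this.lt_or_eq with h | h
          · exact (hmono j i h hiκ).le
          · rw [h]
        rw [hsup] at this
        exact absurd hxi (not_lt.2 this)
      · have hxjs : x js ≤ γ := by
          rw [hxlim js hlim]
          refine Ordinal.bsup_le fun i hi => ?_
          exact (hlow i hi (hi.trans hjsκ)).le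
        have : γ = x js := le_antisymm hjsγ hxjs
        rw [this]
        exact ⟨js, hjsκ, rfl⟩
  have hXotp : otp X = Ordinal.lift.{1,0} kap.ord := by
    rw [← otp_Iio]
    refine (otp_eq_of_iso (A := Iio kap.ord) (B := X)
      (fun j => ⟨x j.1, ⟨j.1, j.2, rfl⟩⟩) ?_ ?_).symm
    · intro a b hab
      exact hmono a.1 b.1 hab b.2
    · rintro ⟨y, j, hj, rfl⟩
      exact ⟨⟨j, hj⟩, rfl⟩
  exact ⟨X, hXsub, hXclub, hXotp⟩

/-! ### The index club `e` -/

/-- The set of indices (inside `otp Cs`) of elements of `X`. -/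
def eSet (Cs X : Set Ordinal) : Set Ordinal.{1} :=
  {ι | ∃ δ ∈ X, oC Cs δ = ι}

section eSet

variable {αs : Ordinal} {Cs X : Set Ordinal}

theorem eSet_subset (hXs : X ⊆ Cs) : eSet Cs X ⊆ Iio (otp Cs) := by
  rintro ζ ⟨δ, hδ, rfl⟩
  exact oC_lt_otp (hXs hδ)

theorem eSet_unbdd (hαs : Order.IsSuccLimit αs) (hCs : IsClubIn Cs αs) (hX : IsClubIn X αs)
    (hXs : X ⊆ Cs) : ∀ ι < otp Cs, ∃ ζ ∈ eSet Cs X, ι < ζ := by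
  intro ι hι
  obtain ⟨δ, hδ, rfl⟩ := oC_surj hι
  have hδαs : δ < αs := hCs.1 hδ
  obtain ⟨δ', hδ', h1⟩ := hX.2.1 (δ + 1) (by rw [Ordinal.add_one_eq_succ]; exact hαs.succ_lt hδαs)
  refine ⟨oC Cs δ', ⟨δ', hδ', rfl⟩, ?_⟩
  rw [oC_lt_oC_iff hδ (hXs hδ')]
  exact lt_of_lt_of_le (lt_add_one δ) h1

theorem eSet_mem_iff (hXs : X ⊆ Cs) {δ : Ordinal} (hδ : δ ∈ Cs) :
    oC Cs δ ∈ eSet Cs X ↔ δ ∈ X := by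
  constructor
  · rintro ⟨δ', hδ', h1⟩
    rwa [oC_inj (hXs hδ') hδ h1] at hδ'
  · intro h
    exact ⟨δ, h, rfl⟩

theorem eSet_closed (hCs : IsClubIn Cs αs) (hX : IsClubIn X αs) (hXs : X ⊆ Cs) :
    ∀ ι < otp Cs, 0 < ι → (∀ ρ < ι, ∃ ζ ∈ eSet Cs X, ζ < ι ∧ ρ < ζ) → ι ∈ eSet Cs X := by
  intro ι hι h0 hcof
  obtain ⟨δh, hδh, hoδh⟩ := oC_surj hι
  set W : Set Ordinal := {δ | δ ∈ X ∧ oC Cs δ < ι} with hWdef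
  have hWIio : W ⊆ Iio δh := by
    rintro δ ⟨h1, h2⟩
    rw [← hoδh, oC_lt_oC_iff (hXs h1) hδh] at h2
    exact h2
  have hWbdd : BddAbove W := bddAbove_of_subset_Iio hWIio
  have hWne : W.Nonempty := by
    obtain ⟨ζ, ⟨δ', hδ', rfl⟩, h1, _⟩ := hcof 0 h0
    exact ⟨δ', hδ', h1⟩
  set σ := sSup W with hσdef
  have hnot : σ ∉ W := by
    intro hσW
    obtain ⟨ζ, ⟨δ', hδ', rfl⟩, h1, h2⟩ := hcof (oC Cs σ) hσW.2
    have hδ'W : δ' ∈ W := ⟨hδ', h1⟩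
    have : δ' ≤ σ := le_csSup hWbdd hδ'W
    rw [← oC_le_oC_iff (hXs hδ') (hXs hσW.1)] at this
    exact absurd h2 (not_lt.2 this)
  have h0σ : 0 < σ := by
    rcases hWne with ⟨δ', hδ'⟩
    rcases (zero_le : 0 ≤ σ).lt_or_eq with h | h
    · exact h
    · exfalso
      have h1 : δ' ≤ σ := le_csSup hWbdd hδ'
      have h2 : δ' = σ := le_antisymm h1 (h ▸ (zero_le : 0 ≤ δ'))
      exact hnot (h2 ▸ hδ')
  have hσδh : σ ≤ δh := csSup_le' fun δ hδ => (hWIio hδ).le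
  have hσαs : σ < αs := lt_of_le_of_lt hσδh (hCs.1 hδh)
  have hσX : σ ∈ X := by
    refine hX.2.2 σ hσαs h0σ ?_
    rw [sSup_eq_iff_unbdd inter_Iio_subset]
    intro ρ hρ
    obtain ⟨δ', hδ', h1⟩ := (lt_csSup_iff hWbdd hWne).1 hρ
    have hδ'σ : δ' < σ := by
      rcases (le_csSup hWbdd hδ').lt_or_eq with h | h
      · exact h
      · exfalso
        rw [← hσdef] at h
        exact hnot (h ▸ hδ')
    exact ⟨δ', ⟨hδ'.1, hδ'σ⟩, h1⟩
  have hσδh' : σ = δh := by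
    rcases hσδh.lt_or_eq with h | h
    · exfalso
      have : oC Cs σ < ι := by
        rw [← hoδh, oC_lt_oC_iff (hXs hσX) hδh]
        exact h
      exact hnot ⟨hσX, this⟩
    · exact h
  exact ⟨σ, hσX, by rw [hσδh', hoδh]⟩

theorem otp_filter (hCs : IsClubIn Cs αs) (hXs : X ⊆ Cs) {K : Set Ordinal}
    (hotp : otp K = otp Cs) :
    otp {δ | δ ∈ K ∧ oC K δ ∈ eSet Cs X} = otp X := by
  have hwit : ∀ d : ↥{δ | δ ∈ K ∧ oC K δ ∈ eSet Cs X}, ∃ δ' ∈ X, oC Cs δ' = oC K d.1 :=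
    fun d => d.2.2
  refine otp_eq_of_iso (fun d => ⟨(hwit d).choose, (hwit d).choose_spec.1⟩) ?_ ?_
  · intro a b hab
    have ha := (hwit a).choose_spec
    have hb := (hwit b).choose_spec
    have h1 : oC K a.1 < oC K b.1 := (oC_lt_oC_iff a.2.1 b.2.1).2 hab
    rw [← ha.2, ← hb.2] at h1
    exact (oC_lt_oC_iff (hXs ha.1) (hXs hb.1)).1 h1
  · rintro ⟨δ', hδ'⟩
    have hι : oC Cs δ' < otp K := by rw [hotp]; exact oC_lt_otp (hXs hδ')
    obtain ⟨δ, hδ, hoδ⟩ := oC_surj hι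
    have hd : δ ∈ {δ | δ ∈ K ∧ oC K δ ∈ eSet Cs X} := ⟨hδ, by rw [hoδ]; exact ⟨δ', hδ', rfl⟩⟩
    refine ⟨⟨δ, hd⟩, ?_⟩
    have h1 := (hwit ⟨δ, hd⟩).choose_spec
    have h2 : oC Cs (hwit ⟨δ, hd⟩).choose = oC Cs δ' := by rw [h1.2]; exact hoδ
    exact Subtype.ext (oC_inj (hXs h1.1) (hXs hδ') h2)

end eSet
/-! ### First surgery: removing the unique `T`-limit point -/

variable {lam : Cardinal.{0}} (sq : SquareSeq lam) (T : Set Ordinal)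

/-- The set of elements of `T` that are limit points of `sq.C β`. -/
def Aset (β : Ordinal) : Set Ordinal :=
  {a | a ∈ T ∧ IsLimitPt a (sq.C β)}

/-- The surgered sequence: remove everything up to the unique `T`-limit point. -/
def C1 (β : Ordinal) : Set Ordinal :=
  @dite _ ((Aset sq T β).Nonempty) (Classical.dec _) (fun h => sq.C β \ Iic h.some)
    (fun _ => sq.C β)

variable {η : Ordinal.{1}}

theorem T_lt_mem {α : Ordinal} (hT : ∀ α ∈ T, α < lam.ord ∧ Order.IsSuccLimit α ∧ otp (sq.C α) = η)
    (hα : α ∈ T) : α < lam.ord := (hT α hα).1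

theorem Aset_subsingleton (hT : ∀ α ∈ T, α < lam.ord ∧ Order.IsSuccLimit α ∧ otp (sq.C α) = η)
    {β : Ordinal} (hβ : β < lam.ord) (hβl : Order.IsSuccLimit β) {a b : Ordinal}
    (ha : a ∈ Aset sq T β) (hb : b ∈ Aset sq T β) : a = b := by
  have main : ∀ a b : Ordinal, a ∈ Aset sq T β → b ∈ Aset sq T β → a < b → False := by
    intro a b ha hb hab
    obtain ⟨haT, hapt⟩ := ha
    obtain ⟨hbT, hbpt⟩ := hb
    obtain ⟨haδ, hal, haotp⟩ := hT a haT
    obtain ⟨hbδ, hbl, hbotp⟩ := hT b hbT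
    have hbβ : b < β := (sq.club β hβ hβl).1 hbpt.1
    have hcob : sq.C β ∩ Iio b = sq.C b := sq.coherent b β hbβ hβ hbl hβl hbpt
    have hapt' : IsLimitPt a (sq.C b) := (isLimitPt_congr hcob hab).2 hapt
    have hcoa : sq.C b ∩ Iio a = sq.C a := sq.coherent a b hab hbδ hal hbl hapt'
    have h1 : oC (sq.C b) a < otp (sq.C b) := oC_lt_otp hapt'.1
    have h2 : oC (sq.C b) a = otp (sq.C a) := by rw [oC, hcoa]
    rw [h2, haotp, hbotp] at h1
    exact absurd h1 (lt_irrefl η)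
  rcases lt_trichotomy a b with h | h | h
  · exact absurd (main a b ha hb h) not_false
  · exact h
  · exact absurd (main b a hb ha h) not_false

theorem C1_eq (hT : ∀ α ∈ T, α < lam.ord ∧ Order.IsSuccLimit α ∧ otp (sq.C α) = η)
    {β : Ordinal} (hβ : β < lam.ord) (hβl : Order.IsSuccLimit β) {a : Ordinal}
    (ha : a ∈ Aset sq T β) : C1 sq T β = sq.C β \ Iic a := by
  have hne : (Aset sq T β).Nonempty := ⟨a, ha⟩
  rw [C1, dif_pos hne, Aset_subsingleton sq T hT hβ hβl hne.some_mem ha]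

theorem C1_eq_self {β : Ordinal} (h : Aset sq T β = ∅) : C1 sq T β = sq.C β := by
  rw [C1, dif_neg]
  rw [h]
  exact Set.not_nonempty_empty

theorem C1_subset (β : Ordinal) : C1 sq T β ⊆ sq.C β := by
  rw [C1]
  split
  · exact diff_subset
  · exact le_refl _

theorem Aset_mem_T_empty (hT : ∀ α ∈ T, α < lam.ord ∧ Order.IsSuccLimit α ∧ otp (sq.C α) = η)
    {α : Ordinal} (hα : α ∈ T) : Aset sq T α = ∅ := by
  obtain ⟨hαδ, hαl, hαotp⟩ := hT α hα
  rw [eq_empty_iff_forall_notMem]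
  rintro a ⟨haT, hapt⟩
  obtain ⟨haδ, hal, haotp⟩ := hT a haT
  have haα : a < α := (sq.club α hαδ hαl).1 hapt.1
  have hcoa : sq.C α ∩ Iio a = sq.C a := sq.coherent a α haα hαδ hal hαl hapt
  have h1 : oC (sq.C α) a < otp (sq.C α) := oC_lt_otp hapt.1
  have h2 : oC (sq.C α) a = otp (sq.C a) := by rw [oC, hcoa]
  rw [h2, haotp, hαotp] at h1
  exact absurd h1 (lt_irrefl η)

theorem C1_eq_T (hT : ∀ α ∈ T, α < lam.ord ∧ Order.IsSuccLimit α ∧ otp (sq.C α) = η)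
    {α : Ordinal} (hα : α ∈ T) : C1 sq T α = sq.C α :=
  C1_eq_self sq T (Aset_mem_T_empty sq T hT hα)

theorem C1_club (hT : ∀ α ∈ T, α < lam.ord ∧ Order.IsSuccLimit α ∧ otp (sq.C α) = η)
    {β : Ordinal} (hβ : β < lam.ord) (hβl : Order.IsSuccLimit β) : IsClubIn (C1 sq T β) β := by
  have hC := sq.club β hβ hβl
  by_cases hne : (Aset sq T β).Nonempty
  · obtain ⟨c, hc⟩ := hne
    rw [C1_eq sq T hT hβ hβl hc]
    have hcβ : c < β := hC.1 hc.2.1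
    refine ⟨fun x hx => hC.1 hx.1, ?_, ?_⟩
    · intro γ hγ
      have hm : max γ (c + 1) < β := by
        rw [Ordinal.add_one_eq_succ]
        exact max_lt hγ (hβl.succ_lt hcβ)
      obtain ⟨y, hy1, hy2⟩ := hC.2.1 _ hm
      refine ⟨y, ⟨hy1, ?_⟩, le_trans (le_max_left _ _) hy2⟩
      rw [mem_Iic, not_le]
      exact lt_of_lt_of_le (lt_of_lt_of_le (lt_add_one c) (le_max_right _ _)) hy2
    · intro γ hγ h0 hsup
      have hun := (sSup_eq_iff_unbdd (inter_Iio_subset (C := sq.C β \ Iic c))).1 hsup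
      obtain ⟨s, hs, _⟩ := hun 0 h0
      have hcγ : c < s := not_le.1 hs.1.2
      have h2 : sSup (sq.C β ∩ Iio γ) = γ := by
        rw [sSup_eq_iff_unbdd inter_Iio_subset]
        intro ρ hρ
        obtain ⟨s', hs', h3⟩ := hun ρ hρ
        exact ⟨s', ⟨hs'.1.1, hs'.2⟩, h3⟩
      refine ⟨hC.2.2 γ hγ h0 h2, ?_⟩
      rw [mem_Iic, not_le]
      exact hcγ.trans hs.2
  · rw [C1, dif_neg hne]
    exact hC

theorem C1_coherent (hT : ∀ α ∈ T, α < lam.ord ∧ Order.IsSuccLimit α ∧ otp (sq.C α) = η)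
    {α β : Ordinal} (hαβ : α < β) (hβ : β < lam.ord) (hαl : Order.IsSuccLimit α) (hβl : Order.IsSuccLimit β)
    (hpt : IsLimitPt α (C1 sq T β)) : C1 sq T β ∩ Iio α = C1 sq T α := by
  have hα : α < lam.ord := hαβ.trans hβ
  have hptC : IsLimitPt α (sq.C β) := hpt.mono (C1_subset sq T β)
  have hco : sq.C β ∩ Iio α = sq.C α := sq.coherent α β hαβ hβ hαl hβl hptC
  by_cases hne : (Aset sq T β).Nonempty
  · obtain ⟨c, hc⟩ := hne
    have heq : C1 sq T β = sq.C β \ Iic c := C1_eq sq T hT hβ hβl hc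
    have hcα : c < α := by
      have h1 : α ∈ C1 sq T β := hpt.1
      rw [heq] at h1
      exact not_le.1 h1.2
    have hcA : c ∈ Aset sq T α := ⟨hc.1, (isLimitPt_congr hco hcα).2 hc.2⟩
    rw [heq, C1_eq sq T hT hα hαl hcA]
    ext x
    simp only [mem_inter_iff, mem_diff, mem_Iio, mem_Iic]
    constructor
    · rintro ⟨⟨h1, h2⟩, h3⟩
      exact ⟨by rw [← hco]; exact ⟨h1, h3⟩, h2⟩
    · rintro ⟨h1, h2⟩
      rw [← hco] at h1
      exact ⟨⟨h1.1, h2⟩, h1.2⟩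
  · have hemp : Aset sq T β = ∅ := not_nonempty_iff_eq_empty.1 hne
    have hempα : Aset sq T α = ∅ := by
      rw [eq_empty_iff_forall_notMem]
      rintro a ⟨haT, hapt⟩
      have haα : a < α := (sq.club α hα hαl).1 hapt.1
      have : a ∈ Aset sq T β := ⟨haT, (isLimitPt_congr hco haα).1 hapt⟩
      rw [hemp] at this
      exact this
    rw [C1_eq_self sq T hemp, C1_eq_self sq T hempα]
    exact hco

theorem C1_not_limitPt (hT : ∀ α ∈ T, α < lam.ord ∧ Order.IsSuccLimit α ∧ otp (sq.C α) = η)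
    {α β : Ordinal} (hα : α ∈ T) (hαβ : α < β) (hβ : β < lam.ord) (hβl : Order.IsSuccLimit β) :
    ¬ IsLimitPt α (C1 sq T β) := by
  intro hpt
  have hptC : IsLimitPt α (sq.C β) := hpt.mono (C1_subset sq T β)
  have hA : α ∈ Aset sq T β := ⟨hα, hptC⟩
  have heq : C1 sq T β = sq.C β \ Iic α := C1_eq sq T hT hβ hβl hA
  have h1 : α ∈ C1 sq T β := hpt.1
  rw [heq] at h1
  exact h1.2 (mem_Iic.2 le_rfl)

theorem C1_noThread (hl : lam.IsRegular) (hω : ℵ₀ < lam)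
    (hT : ∀ α ∈ T, α < lam.ord ∧ Order.IsSuccLimit α ∧ otp (sq.C α) = η) :
    ¬ ∃ H, IsClubIn H lam.ord ∧
      ∀ α, Order.IsSuccLimit α → IsLimitPt α H → H ∩ Set.Iio α = C1 sq T α := by
  rintro ⟨H, hH, hthr⟩
  by_cases hP : ∃ α₁, α₁ ∈ accLim H ∧ (Aset sq T α₁).Nonempty
  · obtain ⟨α₁, hα₁acc, hAne⟩ := hP
    obtain ⟨hα₁l, hα₁pt⟩ := hα₁acc
    have hα₁δ : α₁ < lam.ord := hH.1 hα₁pt.1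
    obtain ⟨c, hc⟩ := hAne
    have hcβ : c < α₁ := (sq.club α₁ hα₁δ hα₁l).1 hc.2.1
    -- key : every limit point of H at or above α₁ has the same surgery point c
    have hkey : ∀ α, Order.IsSuccLimit α → IsLimitPt α H → α₁ ≤ α →
        C1 sq T α = sq.C α \ Iic c ∧ sq.C α ∩ Iio α₁ ≤ sq.C α₁ ∧
          (α₁ < α → sq.C α ∩ Iio α₁ = sq.C α₁) := by
      intro α hαl hαpt hle
      rcases hle.lt_or_eq with hlt | heqα
      · have hαδ : α < lam.ord := hH.1 hαpt.1
        have hHeq : H ∩ Iio α = C1 sq T α := hthr α hαl hαpt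
        have hα₁pt1 : IsLimitPt α₁ (C1 sq T α) := by
          rw [← hHeq]
          refine ⟨⟨hα₁pt.1, hlt⟩, ?_⟩
          have hseteq : H ∩ Iio α ∩ Iio α₁ = H ∩ Iio α₁ := by
            ext x
            simp only [mem_inter_iff, mem_Iio]
            exact ⟨fun ⟨⟨h1, _⟩, h3⟩ => ⟨h1, h3⟩, fun ⟨h1, h3⟩ => ⟨⟨h1, h3.trans hlt⟩, h3⟩⟩
          rw [hseteq]
          exact hα₁pt.2
        have hα₁ptC : IsLimitPt α₁ (sq.C α) := hα₁pt1.mono (C1_subset sq T α)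
        have hcoα : sq.C α ∩ Iio α₁ = sq.C α₁ := sq.coherent α₁ α hlt hαδ hα₁l hαl hα₁ptC
        have hcA : c ∈ Aset sq T α := ⟨hc.1, (isLimitPt_congr hcoα hcβ).1 hc.2⟩
        exact ⟨C1_eq sq T hT hαδ hαl hcA, hcoα.le, fun _ => hcoα⟩
      · rw [← heqα]
        exact ⟨C1_eq sq T hT hα₁δ hα₁l hc, by rw [inter_eq_left.2 (sq.club α₁ hα₁δ hα₁l).1],
          fun h => absurd h (lt_irrefl α₁)⟩
    -- the new thread
    set E : Set Ordinal := sq.C α₁ ∪ (H ∩ Ici α₁) with hEdef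
    have hEsub : E ⊆ Iio lam.ord := by
      rintro x (hx | hx)
      · exact ((sq.club α₁ hα₁δ hα₁l).1 hx).trans hα₁δ
      · exact hH.1 hx.1
    have hElow : ∀ γ ≤ α₁, E ∩ Iio γ = sq.C α₁ ∩ Iio γ := by
      intro γ hγ
      ext x
      simp only [hEdef, mem_inter_iff, mem_union, mem_Iio, mem_Ici]
      constructor
      · rintro ⟨hx | ⟨_, hx2⟩, h2⟩
        · exact ⟨hx, h2⟩
        · exact absurd (lt_of_lt_of_le h2 hγ) (not_lt.2 hx2)
      · rintro ⟨h1, h2⟩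
        exact ⟨Or.inl h1, h2⟩
    have hEhigh : ∀ γ > α₁, γ < lam.ord → 0 < γ → sSup (E ∩ Iio γ) = γ →
        IsLimitPt γ H := by
      intro γ hγα₁ hγδ h0 hsup
      have hun := (sSup_eq_iff_unbdd (inter_Iio_subset (C := E))).1 hsup
      have hsupH : sSup (H ∩ Iio γ) = γ := by
        rw [sSup_eq_iff_unbdd inter_Iio_subset]
        intro ρ hρ
        obtain ⟨y, hy, h1⟩ := hun (max ρ α₁) (max_lt hρ hγα₁)
        have hyα₁ : α₁ < y := lt_of_le_of_lt (le_max_right ρ α₁) h1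
        have hyH : y ∈ H := by
          rcases hy.1 with h | h
          · exact absurd ((sq.club α₁ hα₁δ hα₁l).1 h) (not_lt.2 hyα₁.le)
          · exact h.1
        exact ⟨y, ⟨hyH, hy.2⟩, lt_of_le_of_lt (le_max_left ρ α₁) h1⟩
      exact ⟨hH.2.2 γ hγδ h0 hsupH, hsupH⟩
    have hEclub : IsClubIn E lam.ord := by
      refine ⟨hEsub, ?_, ?_⟩
      · intro γ hγ
        obtain ⟨y, hy1, hy2⟩ := hH.2.1 (max γ α₁) (max_lt hγ hα₁δ)
        exact ⟨y, Or.inr ⟨hy1, le_trans (le_max_right γ α₁) hy2⟩,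
          le_trans (le_max_left γ α₁) hy2⟩
      · intro γ hγ h0 hsup
        rcases lt_trichotomy γ α₁ with hlt | heqγ | hgt
        · have hsup2 : sSup (sq.C α₁ ∩ Iio γ) = γ := by rw [← hElow γ hlt.le]; exact hsup
          exact Or.inl ((sq.club α₁ hα₁δ hα₁l).2.2 γ hlt h0 hsup2)
        · exact Or.inr ⟨heqγ ▸ hα₁pt.1, heqγ.ge⟩
        · exact Or.inr ⟨(hEhigh γ hgt hγ h0 hsup).1, hgt.le⟩
    refine sq.noThread ⟨E, hEclub, ?_⟩
    intro α hαl hαpt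
    rcases lt_trichotomy α α₁ with hlt | heqα | hgt
    · have h1 : E ∩ Iio α = sq.C α₁ ∩ Iio α := hElow α hlt.le
      have hptα₁ : IsLimitPt α (sq.C α₁) := by
        refine ⟨?_, ?_⟩
        · rcases hαpt.1 with h | h
          · exact h
          · exact absurd hlt (not_lt.2 h.2)
        · rw [h1.symm]
          exact hαpt.2
      rw [h1]
      exact sq.coherent α α₁ hlt hα₁δ hαl hα₁l hptα₁
    · rw [heqα, hElow α₁ le_rfl, inter_eq_left.2 (sq.club α₁ hα₁δ hα₁l).1]
    · have hαδ : α < lam.ord := hEsub hαpt.1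
      have h0α : 0 < α := (zero_le : 0 ≤ α₁).trans_lt hgt
      have hptH : IsLimitPt α H := hEhigh α hgt hαδ h0α hαpt.2
      obtain ⟨hC1eq, _, hcoα₁⟩ := hkey α hαl hptH hgt.le
      have hHeq : H ∩ Iio α = sq.C α \ Iic c := by rw [hthr α hαl hptH, hC1eq]
      have hco : sq.C α ∩ Iio α₁ = sq.C α₁ := hcoα₁ hgt
      ext x
      simp only [hEdef, mem_inter_iff, mem_union, mem_Iio, mem_Ici]
      constructor
      · rintro ⟨h | ⟨h1, h2⟩, h3⟩
        · rw [← hco] at h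
          exact h.1
        · have hmem : x ∈ H ∩ Iio α := ⟨h1, h3⟩
          rw [hHeq] at hmem
          exact hmem.1
      · intro hx
        have hxα : x < α := (sq.club α hαδ hαl).1 hx
        rcases lt_or_ge x α₁ with h | h
        · refine ⟨Or.inl ?_, hxα⟩
          rw [← hco]
          exact ⟨hx, h⟩
        · have hxc : x ∉ Iic c := by
            rw [mem_Iic, not_le]
            exact lt_of_lt_of_le hcβ h
          have hmem : x ∈ H ∩ Iio α := by
            rw [hHeq]
            exact ⟨hx, hxc⟩
          exact ⟨Or.inr ⟨hmem.1, h⟩, hxα⟩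
  · -- no surgery ever happens on limit points of H: H is a thread for sq.C
    refine sq.noThread ⟨H, hH, fun α hαl hαpt => ?_⟩
    have hemp : Aset sq T α = ∅ := by
      rw [← not_nonempty_iff_eq_empty]
      intro hne
      exact hP ⟨α, ⟨hαl, hαpt⟩, hne⟩
    rw [hthr α hαl hαpt, C1_eq_self sq T hemp]

/-! ### Second surgery: thinning by the index club `e` -/

/-- Supremum of `e` below `μ`. -/
def sfun (e : Set Ordinal.{1}) (μ : Ordinal.{1}) : Ordinal.{1} :=
  sSup (e ∩ Iio μ)

theorem sfun_le_self (e : Set Ordinal.{1}) (μ : Ordinal.{1}) : sfun e μ ≤ μ :=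
  csSup_le' fun _ hζ => hζ.2.le

theorem sfun_le_eta {e : Set Ordinal.{1}} {η : Ordinal.{1}} (he1 : e ⊆ Iio η) (μ : Ordinal.{1}) :
    sfun e μ ≤ η :=
  csSup_le' fun _ hζ => (he1 hζ.1).le

theorem sfun_ge {e : Set Ordinal.{1}} {η : Ordinal.{1}} (he1 : e ⊆ Iio η)
    (he2 : ∀ ι < η, ∃ ζ ∈ e, ι < ζ) {μ : Ordinal.{1}} (h : η ≤ μ) : sfun e μ = η := by
  have hseteq : e ∩ Iio μ = e := by
    rw [inter_eq_left]
    exact fun ζ hζ => lt_of_lt_of_le (he1 hζ) h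
  rw [sfun, hseteq]
  refine le_antisymm (csSup_le' fun ζ hζ => (he1 hζ).le) (le_of_forall_lt fun ι hι => ?_)
  obtain ⟨ζ, hζ, h1⟩ := he2 ι hι
  exact h1.trans_le (le_csSup (bddAbove_of_subset_Iio he1) hζ)

variable {lam : Cardinal.{0}} (sq : SquareSeq lam) (T : Set Ordinal) (e : Set Ordinal.{1})

/-- The thinned sequence. -/
def C2 (β : Ordinal) : Set Ordinal :=
  {δ | δ ∈ C1 sq T β ∧ (oC (C1 sq T β) δ ∈ e ∨
    sfun e (otp (C1 sq T β)) ≤ oC (C1 sq T β) δ)}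

theorem C2_subset (β : Ordinal) : C2 sq T e β ⊆ C1 sq T β := fun _ h => h.1

variable {η : Ordinal.{1}}

theorem C2_club (hT : ∀ α ∈ T, α < lam.ord ∧ Order.IsSuccLimit α ∧ otp (sq.C α) = η)
    (he1 : e ⊆ Iio η)
    (he3 : ∀ ι < η, 0 < ι → (∀ ρ < ι, ∃ ζ ∈ e, ζ < ι ∧ ρ < ζ) → ι ∈ e)
    {β : Ordinal} (hβ : β < lam.ord) (hβl : Order.IsSuccLimit β) : IsClubIn (C2 sq T e β) β := by
  set K := C1 sq T β with hKdef
  have hK : IsClubIn K β := C1_club sq T hT hβ hβl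
  set μ := otp K with hμdef
  refine ⟨fun x hx => hK.1 hx.1, ?_, ?_⟩
  · -- unbounded
    intro γ hγ
    obtain ⟨δ₀, hδ₀K, hγδ₀⟩ := hK.2.1 γ hγ
    have hι₀ : oC K δ₀ < μ := oC_lt_otp hδ₀K
    rcases lt_or_ge (sfun e μ) μ with hs | hs
    · have hι₁ : max (oC K δ₀) (sfun e μ) < μ := max_lt hι₀ hs
      obtain ⟨δ₁, hδ₁K, hoδ₁⟩ := oC_surj hι₁
      refine ⟨δ₁, ⟨hδ₁K, Or.inr ?_⟩, ?_⟩
      · rw [hoδ₁]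
        exact le_max_right _ _
      · refine hγδ₀.trans ?_
        rw [← oC_le_oC_iff hδ₀K hδ₁K, hoδ₁]
        exact le_max_left _ _
    · have hseq : sfun e μ = μ := le_antisymm (sfun_le_self e μ) hs
      have hne : (e ∩ Iio μ).Nonempty := by
        by_contra hc
        rw [not_nonempty_iff_eq_empty] at hc
        have : sfun e μ = 0 := by rw [sfun, hc, csSup_empty]; rfl
        rw [hseq] at this
        exact absurd (this ▸ hι₀) (not_lt_of_ge zero_le)
      have hιlt : oC K δ₀ < sSup (e ∩ Iio μ) := by rw [← sfun]; rw [hseq]; exact hι₀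
      obtain ⟨ζ, hζ, h1⟩ := (lt_csSup_iff (bddAbove_of_subset_Iio
        (inter_Iio_subset (C := e))) hne).1 hιlt
      obtain ⟨δ₁, hδ₁K, hoδ₁⟩ := oC_surj hζ.2
      refine ⟨δ₁, ⟨hδ₁K, Or.inl (by rw [hoδ₁]; exact hζ.1)⟩, ?_⟩
      refine hγδ₀.trans ?_
      rw [← oC_le_oC_iff hδ₀K hδ₁K, hoδ₁]
      exact h1.le
  · -- closed
    intro γ hγ h0 hsup
    have hun := (sSup_eq_iff_unbdd (inter_Iio_subset (C := C2 sq T e β))).1 hsup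
    have hγK : γ ∈ K := by
      refine hK.2.2 γ hγ h0 ?_
      rw [sSup_eq_iff_unbdd inter_Iio_subset]
      intro ρ hρ
      obtain ⟨δ, hδ, h1⟩ := hun ρ hρ
      exact ⟨δ, ⟨hδ.1.1, hδ.2⟩, h1⟩
    set ξ := oC K γ with hξdef
    have hξμ : ξ < μ := oC_lt_otp hγK
    have hidx : ∀ ρι < ξ, ∃ ζ, ζ < ξ ∧ (ζ ∈ e ∨ sfun e μ ≤ ζ) ∧ ρι < ζ := by
      intro ρι hρι
      have hξotp : ξ = otp (K ∩ Iio γ) := rfl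
      obtain ⟨δρ, hδρ, hoδρ⟩ := oC_surj (C := K ∩ Iio γ) (hξotp ▸ hρι)
      have hoδρ' : oC K δρ = ρι := by
        rw [oC_congr hδρ.2.le]
        exact hoδρ
      obtain ⟨δ, hδ, h1⟩ := hun δρ hδρ.2
      refine ⟨oC K δ, (oC_lt_oC_iff hδ.1.1 hγK).2 hδ.2, hδ.1.2, ?_⟩
      rw [← hoδρ']
      exact (oC_lt_oC_iff hδρ.1 hδ.1.1).2 h1
    have hξ0 : 0 < ξ := by
      rcases (zero_le : 0 ≤ ξ).lt_or_eq with h | h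
      · exact h
      · exfalso
        have : C2 sq T e β ∩ Iio γ = ∅ := by
          rw [eq_empty_iff_forall_notMem]
          rintro δ ⟨hδ1, hδ2⟩
          have := (oC_lt_oC_iff hδ1.1 hγK).2 hδ2
          rw [← hξdef, ← h] at this
          exact absurd this (not_lt_of_ge zero_le)
        rw [this, csSup_empty] at hsup
        exact absurd (hsup ▸ h0) (lt_irrefl _)
    rcases le_or_gt (sfun e μ) ξ with hc | hc
    · exact ⟨hγK, Or.inr hc⟩
    · have hξη : ξ < η := hc.trans_le (sfun_le_eta he1 μ)
      refine ⟨hγK, Or.inl (he3 ξ hξη hξ0 fun ρ hρ => ?_)⟩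
      obtain ⟨ζ, h1, h2, h3⟩ := hidx ρ hρ
      rcases h2 with h2 | h2
      · exact ⟨ζ, h2, h1, h3⟩
      · exact absurd (h2.trans h1.le) (not_le.2 hc)

theorem C2_coherent (hT : ∀ α ∈ T, α < lam.ord ∧ Order.IsSuccLimit α ∧ otp (sq.C α) = η)
    (he1 : e ⊆ Iio η)
    {γ β : Ordinal} (hγβ : γ < β) (hβ : β < lam.ord) (hγl : Order.IsSuccLimit γ) (hβl : Order.IsSuccLimit β)
    (hpt : IsLimitPt γ (C2 sq T e β)) : C2 sq T e β ∩ Iio γ = C2 sq T e γ := by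
  set K := C1 sq T β with hKdef
  have hK : IsClubIn K β := C1_club sq T hT hβ hβl
  set μ := otp K with hμdef
  have hptK : IsLimitPt γ K := hpt.mono (C2_subset sq T e β)
  have hco1 : K ∩ Iio γ = C1 sq T γ := C1_coherent sq T hT hγβ hβ hγl hβl hptK
  have hγK : γ ∈ K := hptK.1
  set ξ := oC K γ with hξdef
  have hξμ : ξ < μ := oC_lt_otp hγK
  have hμγ : otp (C1 sq T γ) = ξ := by rw [← hco1]; rfl
  have hoeq : ∀ δ < γ, oC (C1 sq T γ) δ = oC K δ := by
    intro δ hδ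
    rw [← hco1, ← oC_congr hδ.le]
  have hidx : ∀ ρι < ξ, ∃ ζ, ζ < ξ ∧ (ζ ∈ e ∨ sfun e μ ≤ ζ) ∧ ρι < ζ := by
    intro ρι hρι
    have hun := (sSup_eq_iff_unbdd (inter_Iio_subset (C := C2 sq T e β))).1 hpt.2
    have hξotp : ξ = otp (K ∩ Iio γ) := rfl
    obtain ⟨δρ, hδρ, hoδρ⟩ := oC_surj (C := K ∩ Iio γ) (hξotp ▸ hρι)
    have hoδρ' : oC K δρ = ρι := by
      rw [oC_congr hδρ.2.le]
      exact hoδρ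
    obtain ⟨δ, hδ, h1⟩ := hun δρ hδρ.2
    refine ⟨oC K δ, (oC_lt_oC_iff hδ.1.1 hγK).2 hδ.2, hδ.1.2, ?_⟩
    rw [← hoδρ']
    exact (oC_lt_oC_iff hδρ.1 hδ.1.1).2 h1
  have hcond : ∀ ζ < ξ, ((ζ ∈ e ∨ sfun e μ ≤ ζ) ↔ (ζ ∈ e ∨ sfun e ξ ≤ ζ)) := by
    rcases lt_or_ge (sfun e μ) ξ with hc | hc
    · -- tail visible: sfun e ξ = sfun e μ
      have hseteq : e ∩ Iio ξ = e ∩ Iio μ := by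
        ext ζ
        refine ⟨fun h => ⟨h.1, h.2.trans hξμ⟩, fun h => ⟨h.1, ?_⟩⟩
        exact lt_of_le_of_lt (le_csSup (bddAbove_of_subset_Iio
          (inter_Iio_subset (C := e))) h) hc
      have : sfun e ξ = sfun e μ := by rw [sfun, sfun, hseteq]
      intro ζ _
      rw [this]
    · -- `ξ` is a limit of `e`: sfun e ξ = ξ
      have hsξ : sfun e ξ = ξ := by
        refine le_antisymm (sfun_le_self e ξ) (le_of_forall_lt fun ρ hρ => ?_)
        obtain ⟨ζ, h1, h2, h3⟩ := hidx ρ hρ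
        have hζe : ζ ∈ e := by
          rcases h2 with h2 | h2
          · exact h2
          · exact absurd (h2.trans_lt h1) (not_lt.2 hc)
        exact h3.trans_le (le_csSup (bddAbove_of_subset_Iio
          (inter_Iio_subset (C := e))) ⟨hζe, h1⟩)
      intro ζ hζ
      rw [hsξ]
      constructor
      · rintro (h | h)
        · exact Or.inl h
        · exact absurd (hc.trans h) (not_le.2 hζ)
      · rintro (h | h)
        · exact Or.inl h
        · exact absurd h (not_le.2 hζ)
  ext x
  simp only [C2, mem_inter_iff, mem_setOf_eq, mem_Iio]
  constructor
  · rintro ⟨⟨h1, h2⟩, h3⟩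
    have hxK : x ∈ C1 sq T γ := by rw [← hco1]; exact ⟨h1, h3⟩
    refine ⟨hxK, ?_⟩
    rw [hμγ, hoeq x h3]
    have hxξ : oC K x < ξ := (oC_lt_oC_iff h1 hγK).2 h3
    exact (hcond _ hxξ).1 h2
  · rintro ⟨h1, h2⟩
    have hx : x ∈ K ∧ x < γ := by rw [← hco1] at h1; exact ⟨h1.1, h1.2⟩
    refine ⟨⟨hx.1, ?_⟩, hx.2⟩
    rw [hμγ, hoeq x hx.2] at h2
    have hxξ : oC K x < ξ := (oC_lt_oC_iff hx.1 hγK).2 hx.2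
    exact (hcond _ hxξ).2 h2

/-! ### No thread for the thinned sequence -/

section union_club

variable {lam : Cardinal.{0}} {B D : Set Ordinal} {α₁ : Ordinal}

theorem union_low (hB : B ⊆ Iio α₁) {γ : Ordinal} (hγ : γ ≤ α₁) :
    (B ∪ (D ∩ Ici α₁)) ∩ Iio γ = B ∩ Iio γ := by
  ext x
  simp only [mem_inter_iff, mem_union, mem_Iio, mem_Ici]
  constructor
  · rintro ⟨hx | ⟨_, hx2⟩, h2⟩
    · exact ⟨hx, h2⟩
    · exact absurd (lt_of_lt_of_le h2 hγ) (not_lt.2 hx2)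
  · rintro ⟨h1, h2⟩
    exact ⟨Or.inl h1, h2⟩

theorem union_high (hB : B ⊆ Iio α₁) (hD : IsClubIn D lam.ord) {γ : Ordinal}
    (hγα₁ : α₁ < γ) (hγδ : γ < lam.ord) (h0 : 0 < γ)
    (hsup : sSup ((B ∪ (D ∩ Ici α₁)) ∩ Iio γ) = γ) : IsLimitPt γ D := by
  have hun := (sSup_eq_iff_unbdd (inter_Iio_subset (C := B ∪ (D ∩ Ici α₁)))).1 hsup
  have hsupH : sSup (D ∩ Iio γ) = γ := by
    rw [sSup_eq_iff_unbdd inter_Iio_subset]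
    intro ρ hρ
    obtain ⟨y, hy, h1⟩ := hun (max ρ α₁) (max_lt hρ hγα₁)
    have hyα₁ : α₁ < y := lt_of_le_of_lt (le_max_right ρ α₁) h1
    have hyH : y ∈ D := by
      rcases hy.1 with h | h
      · exact absurd (hB h) (not_lt.2 hyα₁.le)
      · exact h.1
    exact ⟨y, ⟨hyH, hy.2⟩, lt_of_le_of_lt (le_max_left ρ α₁) h1⟩
  exact ⟨hD.2.2 γ hγδ h0 hsupH, hsupH⟩

theorem union_club (hB : IsClubIn B α₁) (hD : IsClubIn D lam.ord) (hα₁D : α₁ ∈ D)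
    (hα₁δ : α₁ < lam.ord) : IsClubIn (B ∪ (D ∩ Ici α₁)) lam.ord := by
  refine ⟨?_, ?_, ?_⟩
  · rintro x (hx | hx)
    · exact (hB.1 hx).trans hα₁δ
    · exact hD.1 hx.1
  · intro γ hγ
    obtain ⟨y, hy1, hy2⟩ := hD.2.1 (max γ α₁) (max_lt hγ hα₁δ)
    exact ⟨y, Or.inr ⟨hy1, le_trans (le_max_right γ α₁) hy2⟩, le_trans (le_max_left γ α₁) hy2⟩
  · intro γ hγ h0 hsup
    rcases lt_trichotomy γ α₁ with hlt | heqγ | hgt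
    · have hsup2 : sSup (B ∩ Iio γ) = γ := by rw [← union_low hB.1 hlt.le]; exact hsup
      exact Or.inl (hB.2.2 γ hlt h0 hsup2)
    · exact Or.inr ⟨heqγ ▸ hα₁D, heqγ.ge⟩
    · exact Or.inr ⟨(union_high hB.1 hD hgt hγ h0 hsup).1, hgt.le⟩

end union_club

variable {lam : Cardinal.{0}} (sq : SquareSeq lam) (T : Set Ordinal) (e : Set Ordinal.{1})
  {η : Ordinal.{1}}

theorem C2_noThread (hl : lam.IsRegular) (hω : ℵ₀ < lam)
    (hT : ∀ α ∈ T, α < lam.ord ∧ Order.IsSuccLimit α ∧ otp (sq.C α) = η)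
    (hTstat : StationaryIn T lam.ord)
    (he1 : e ⊆ Iio η) (he2 : ∀ ι < η, ∃ ζ ∈ e, ι < ζ) :
    ¬ ∃ G, IsClubIn G lam.ord ∧
      ∀ α, Order.IsSuccLimit α → IsLimitPt α G → G ∩ Set.Iio α = C2 sq T e α := by
  rintro ⟨G, hG, hthr⟩
  obtain ⟨ᾱ, hᾱT, hᾱacc⟩ := hTstat (accLim G) (accLim_club hl hω hG)
  obtain ⟨hᾱδ, hᾱl, hᾱotp⟩ := hT ᾱ hᾱT
  obtain ⟨α₂, hα₂l, hα₂pt, hᾱα₂, hα₂δ⟩ := club_omega_lim hl hω hG (hG.1 hᾱacc.2.1)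
  set K₂ := C1 sq T α₂ with hK₂def
  have hK₂ : IsClubIn K₂ α₂ := C1_club sq T hT hα₂δ hα₂l
  have hKeq : G ∩ Iio α₂ = C2 sq T e α₂ := hthr α₂ hα₂l hα₂pt
  have hᾱG : IsLimitPt ᾱ G := hᾱacc.2
  have hᾱptC2 : IsLimitPt ᾱ (C2 sq T e α₂) := by
    constructor
    · rw [← hKeq]
      exact ⟨hᾱG.1, hᾱα₂⟩
    · have hseteq : C2 sq T e α₂ ∩ Iio ᾱ = G ∩ Iio ᾱ := by
        rw [← hKeq]
        ext x
        simp only [mem_inter_iff, mem_Iio]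
        exact ⟨fun ⟨⟨h1, _⟩, h3⟩ => ⟨h1, h3⟩, fun ⟨h1, h3⟩ => ⟨⟨h1, h3.trans hᾱα₂⟩, h3⟩⟩
      rw [hseteq]
      exact hᾱG.2
  have hᾱK₂ : IsLimitPt ᾱ K₂ := hᾱptC2.mono (C2_subset sq T e α₂)
  have hco : K₂ ∩ Iio ᾱ = C1 sq T ᾱ := C1_coherent sq T hT hᾱα₂ hα₂δ hᾱl hα₂l hᾱK₂
  have hμ₂ : η < otp K₂ := by
    have h1 : oC K₂ ᾱ < otp K₂ := oC_lt_otp hᾱK₂.1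
    have h2 : oC K₂ ᾱ = η := by
      rw [oC, hco, C1_eq_T sq T hT hᾱT, hᾱotp]
    rwa [h2] at h1
  -- the new thread for `C1`
  set E : Set Ordinal := K₂ ∪ (G ∩ Ici α₂) with hEdef
  have hEclub : IsClubIn E lam.ord := union_club hK₂ hG hα₂pt.1 hα₂δ
  refine C1_noThread sq T hl hω hT ⟨E, hEclub, ?_⟩
  intro α hαl hαpt
  rcases lt_trichotomy α α₂ with hlt | heqα | hgt
  · have h1 : E ∩ Iio α = K₂ ∩ Iio α := union_low hK₂.1 hlt.le
    have hptα₂ : IsLimitPt α K₂ := by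
      refine ⟨?_, ?_⟩
      · rcases hαpt.1 with h | h
        · exact h
        · exact absurd hlt (not_lt.2 h.2)
      · rw [h1.symm]
        exact hαpt.2
    rw [h1]
    exact C1_coherent sq T hT hlt hα₂δ hαl hα₂l hptα₂
  · rw [heqα, union_low hK₂.1 le_rfl, inter_eq_left.2 hK₂.1]
  · have hαδ : α < lam.ord := hEclub.1 hαpt.1
    have h0α : 0 < α := (zero_le : 0 ≤ α₂).trans_lt hgt
    have hptG : IsLimitPt α G := union_high hK₂.1 hG hgt hαδ h0α hαpt.2
    have hHeq : G ∩ Iio α = C2 sq T e α := hthr α hαl hptG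
    have hα₂ptC2 : IsLimitPt α₂ (C2 sq T e α) := by
      constructor
      · rw [← hHeq]
        exact ⟨hα₂pt.1, hgt⟩
      · have hseteq : C2 sq T e α ∩ Iio α₂ = G ∩ Iio α₂ := by
          rw [← hHeq]
          ext x
          simp only [mem_inter_iff, mem_Iio]
          exact ⟨fun ⟨⟨h1, _⟩, h3⟩ => ⟨h1, h3⟩, fun ⟨h1, h3⟩ => ⟨⟨h1, h3.trans hgt⟩, h3⟩⟩
        rw [hseteq]
        exact hα₂pt.2
    have hα₂ptC1 : IsLimitPt α₂ (C1 sq T α) := hα₂ptC2.mono (C2_subset sq T e α)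
    have hcoα : C1 sq T α ∩ Iio α₂ = K₂ := C1_coherent sq T hT hgt hαδ hα₂l hαl hα₂ptC1
    have hημα : η < oC (C1 sq T α) α₂ := by
      have : oC (C1 sq T α) α₂ = otp K₂ := by rw [oC, hcoα]
      rw [this]
      exact hμ₂
    have hsμα : sfun e (otp (C1 sq T α)) = η := by
      refine sfun_ge he1 he2 ?_
      exact (hημα.trans (oC_lt_otp hα₂ptC1.1)).le
    ext x
    simp only [hEdef, mem_inter_iff, mem_union, mem_Iio, mem_Ici]
    constructor
    · rintro ⟨h | ⟨h1, h2⟩, h3⟩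
      · rw [← hcoα] at h
        exact h.1
      · have hmem : x ∈ G ∩ Iio α := ⟨h1, h3⟩
        rw [hHeq] at hmem
        exact hmem.1
    · intro hx
      have hxα : x < α := (C1_club sq T hT hαδ hαl).1 hx
      rcases lt_or_ge x α₂ with h | h
      · refine ⟨Or.inl ?_, hxα⟩
        rw [← hcoα]
        exact ⟨hx, h⟩
      · have hxC2 : x ∈ C2 sq T e α := by
          refine ⟨hx, Or.inr ?_⟩
          rw [hsμα]
          refine hημα.le.trans ?_
          rw [oC_le_oC_iff hα₂ptC1.1 hx]
          exact h
        have hmem : x ∈ G ∩ Iio α := by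
          rw [hHeq]
          exact hxC2
        exact ⟨Or.inr ⟨hmem.1, h⟩, hxα⟩

theorem C2_eq_T (hT : ∀ α ∈ T, α < lam.ord ∧ Order.IsSuccLimit α ∧ otp (sq.C α) = η)
    (he1 : e ⊆ Iio η) (he2 : ∀ ι < η, ∃ ζ ∈ e, ι < ζ)
    {α : Ordinal} (hα : α ∈ T) :
    C2 sq T e α = {δ | δ ∈ sq.C α ∧ oC (sq.C α) δ ∈ e} := by
  obtain ⟨hαδ, hαl, hαotp⟩ := hT α hα
  have h1 : C1 sq T α = sq.C α := C1_eq_T sq T hT hα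
  have hs : sfun e (otp (sq.C α)) = η := sfun_ge he1 he2 (by rw [hαotp])
  ext δ
  simp only [C2, h1, mem_setOf_eq, hs]
  constructor
  · rintro ⟨hδ, h | h⟩
    · exact ⟨hδ, h⟩
    · exfalso
      have := oC_lt_otp (C := sq.C α) hδ
      rw [hαotp] at this
      exact absurd h (not_le.2 this)
  · rintro ⟨hδ, h⟩
    exact ⟨hδ, Or.inl h⟩

theorem C2_not_limitPt (hT : ∀ α ∈ T, α < lam.ord ∧ Order.IsSuccLimit α ∧ otp (sq.C α) = η)
    {α β : Ordinal} (hα : α ∈ T) (hαβ : α < β) (hβ : β < lam.ord) (hβl : Order.IsSuccLimit β) :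
    ¬ IsLimitPt α (C2 sq T e β) := by
  intro hpt
  exact C1_not_limitPt sq T hT hα hαβ hβ hβl (hpt.mono (C2_subset sq T e β))


/-- Proposition 5.4: for infinite regular cardinals `kap < lam`, `□^kap(lam)`
holds iff there are a `□(lam)`-sequence `⟨C_α⟩` and a stationary
`S ⊆ S^lam_kap` such that for all `α ∈ S`, `otp(C_α) = kap` and `α` is not a
limit point of `C_β` for any `β` with `α < β < lam`. -/
theorem statement6 (lam kap : Cardinal.{0}) (hk : kap.IsRegular)
    (hl : lam.IsRegular) (hkl : kap < lam) :
    SqSup lam kap ↔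
      ∃ (sq : SquareSeq lam) (S : Set Ordinal),
        S ⊆ {α | α < lam.ord ∧ α.cof = kap} ∧ StationaryIn S lam.ord ∧
        ∀ α ∈ S, otp (sq.C α) = Ordinal.lift.{1} kap.ord ∧
          ∀ β, α < β → β < lam.ord → Order.IsSuccLimit β → ¬ IsLimitPt α (sq.C β) := by
  classical
  have hω : ℵ₀ < lam := lt_of_le_of_lt hk.aleph0_le hkl
  constructor
  · -- forward direction
    rintro ⟨sq, hstat⟩
    set S₀ := {α | α < lam.ord ∧ α.cof = kap ∧ otp (sq.C α) < Ordinal.lift.{1,0} α}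
      with hS₀def
    set f : Ordinal → Ordinal := fun α =>
      if h : ∃ ν : Ordinal.{0}, Ordinal.lift.{1,0} ν = otp (sq.C α) then h.choose else 0
      with hfdef
    have hf : ∀ α ∈ S₀, Ordinal.lift.{1,0} (f α) = otp (sq.C α) ∧ f α < α := by
      intro α hα
      have hex : ∃ ν : Ordinal.{0}, Ordinal.lift.{1,0} ν = otp (sq.C α) :=
        Ordinal.mem_range_lift_of_le (a := α) hα.2.2.le
      have h1 : f α = hex.choose := by
        simp only [hfdef]
        rw [dif_pos hex]
      rw [h1, hex.choose_spec]
      refine ⟨rfl, ?_⟩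
      rw [← Ordinal.lift_lt.{1,0}, hex.choose_spec]
      exact hα.2.2
    obtain ⟨ν₀, hstatT⟩ := fodor hl hω hstat f (fun α hα => (hf α hα).2)
    set T := {α | α ∈ S₀ ∧ f α = ν₀} with hTdef
    set η := Ordinal.lift.{1,0} ν₀ with hηdef
    have hT : ∀ α ∈ T, α < lam.ord ∧ Order.IsSuccLimit α ∧ otp (sq.C α) = η := by
      intro α hα
      have h1 := hf α hα.1
      refine ⟨hα.1.1, ?_, by rw [← h1.1, hα.2]⟩
      exact Ordinal.aleph0_le_cof.1 (by rw [hα.1.2.1]; exact hk.aleph0_le)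
    obtain ⟨αs, hαsT, -⟩ := hstatT (Iio lam.ord) (isClubIn_Iio lam.ord)
    obtain ⟨hαsδ, hαsl, hαsotp⟩ := hT αs hαsT
    have hαscof : αs.cof = kap := hαsT.1.2.1
    have hCs : IsClubIn (sq.C αs) αs := sq.club αs hαsδ hαsl
    obtain ⟨X, hXs, hXclub, hXotp⟩ := exists_otp_club hk hαscof hCs
    set e := eSet (sq.C αs) X with hedef
    have he1 : e ⊆ Iio η := by
      rw [← hαsotp]
      exact eSet_subset hXs
    have he2 : ∀ ι < η, ∃ ζ ∈ e, ι < ζ := fun ι hι =>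
      eSet_unbdd hαsl hCs hXclub hXs ι (by rw [hαsotp]; exact hι)
    have he3 : ∀ ι < η, 0 < ι → (∀ ρ < ι, ∃ ζ ∈ e, ζ < ι ∧ ρ < ζ) → ι ∈ e := fun ι hι =>
      eSet_closed hCs hXclub hXs ι (by rw [hαsotp]; exact hι)
    refine ⟨⟨C2 sq T e, fun α hα hαl => C2_club sq T e hT he1 he3 hα hαl,
      fun α β hαβ hβ hαl hβl hpt => C2_coherent sq T e hT he1 hαβ hβ hαl hβl hpt,
      C2_noThread sq T e hl hω hT hstatT he1 he2⟩, T,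
      fun α hα => ⟨hα.1.1, hα.1.2.1⟩, hstatT, ?_⟩
    intro α hα
    constructor
    · show otp (C2 sq T e α) = _
      rw [C2_eq_T sq T e hT he1 he2 hα, ← hXotp]
      exact otp_filter hCs hXs (by rw [(hT α hα).2.2, hαsotp])
    · intro β hαβ hβ hβl
      exact C2_not_limitPt sq T e hT hα hαβ hβ hβl
  · -- backward direction
    rintro ⟨sq, S, hsub, hstat, hprop⟩
    refine ⟨sq, ?_⟩
    intro D hD
    have hko : kap.ord < lam.ord := Cardinal.ord_lt_ord.2 hkl
    have hlim : Order.IsSuccLimit lam.ord := Cardinal.isSuccLimit_ord hl.aleph0_le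
    obtain ⟨α, hαS, hαD, hαk⟩ := hstat (D ∩ Ioi kap.ord) (hD.inter_Ioi hlim hko)
    obtain ⟨hαδ, hαcof⟩ := hsub hαS
    refine ⟨α, ⟨hαδ, hαcof, ?_⟩, hαD⟩
    rw [(hprop α hαS).1]
    exact Ordinal.lift_lt.2 hαk

end Paper
end
end
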